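/- arXiv:1707.04130 — 8 statements merged into one kernel-verified Lean document; each statement's English description precedes it below -/
import Mathlib

section
/- Define a_n = Γ(n) Γ(2p) / Γ(n + 2p - 1) for n ≥ 1 and M_n = a_n S_n. Then (M_n) is a martingale with respect to the filtration F_n = σ(X_1,...,X_n), i.e., E[M_{n+1} | F_n] = M_n almost surely. -/
/-!
Write `F_n = σ(X_1, …, X_n)`. The step `X_{n+1} = α_n X_{β_n}` is the sum over `k ≤ n` of the
`F_n`-measurable `X_k` times `α_n 1{β_n = k}`, which is independent of `F_n` and has mean
`(2p - 1)/n`. Hence `E[S_{n+1} | F_n] = (1 + (2p - 1)/n) S_n`, and `Γ(x + 1) = x Γ(x)` gives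
`a_{n+1} (1 + (2p - 1)/n) = a_n`.
-/

open MeasureTheory ProbabilityTheory Real Filter Finset
open scoped ENNReal

lemma measurable_comap_pi_fin_of_mem_Icc {Ω E : Type*} [MeasurableSpace E] (X : ℕ → Ω → E)
    {n k : ℕ} (hk : k ∈ Icc 1 n) :
    Measurable[MeasurableSpace.comap (fun ω (i : Fin n) => X (i + 1) ω) inferInstance] (X k) := by
  obtain ⟨hk₁, hkn⟩ := Finset.mem_Icc.1 hk
  have hX : X k =
      (fun v : Fin n → E => v ⟨k - 1, by omega⟩) ∘ fun ω (i : Fin n) => X (i + 1) ω := by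
    funext ω
    simp only [Function.comp_apply]
    congr
    omega
  rw [hX]
  exact (measurable_pi_apply _).comp (comap_measurable _)

lemma Gamma_ratio_succ {x s : ℝ} (hx : x ≠ 0) (hxs : 0 < x + s) :
    Gamma (x + 1) / Gamma (x + s + 1) * (1 + s / x) = Gamma x / Gamma (x + s) := by
  have hΓ := (Gamma_pos_of_pos hxs).ne'
  rw [Gamma_add_one hx, Gamma_add_one hxs.ne']
  field_simp

lemma erw_norm_eq_one {Ω : Type*} {X α : ℕ → Ω → ℝ} {β : ℕ → Ω → ℕ}
    (hX1pm : ∀ ω, X 1 ω = 1 ∨ X 1 ω = -1)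
    (hrec : ∀ n ≥ 1, ∀ ω, X (n + 1) ω = α n ω * X (β n ω) ω)
    (hαpm : ∀ n, ∀ ω, α n ω = 1 ∨ α n ω = -1)
    (hβrange : ∀ n ≥ 1, ∀ ω, β n ω ∈ Set.Icc 1 n) :
    ∀ k ≥ 1, ∀ ω, ‖X k ω‖ = 1 := by
  intro k
  induction k using Nat.strong_induction_on with
  | _ k ih =>
    intro hk ω
    match k, hk with
    | 1, _ => rcases hX1pm ω with h | h <;> simp [h]
    | j + 2, _ =>
      have hβ := hβrange (j + 1) (by omega) ω
      rw [hrec (j + 1) (by omega), norm_mul, ih _ (Nat.lt_succ_of_le hβ.2) hβ.1, mul_one]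
      rcases hαpm (j + 1) ω with h | h <;> simp [h]

section

variable {Ω : Type*} [mΩ : MeasurableSpace Ω] {μ : Measure Ω}

lemma integral_eq_two_mul_measureReal_sub_one [IsProbabilityMeasure μ] {f : Ω → ℝ}
    (hf : Measurable f) (hpm : ∀ ω, f ω = 1 ∨ f ω = -1) :
    ∫ ω, f ω ∂μ = 2 * μ.real {ω | f ω = 1} - 1 := by
  have hs : MeasurableSet {ω | f ω = 1} := hf (measurableSet_singleton 1)
  have hdecomp : ∀ ω, f ω = 2 * {ω | f ω = 1}.indicator 1 ω - 1 := fun ω => by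
    rcases hpm ω with h | h <;> simp [Set.indicator_apply, h] <;> norm_num
  have hint : Integrable ({ω | f ω = 1}.indicator (1 : Ω → ℝ)) μ :=
    (integrable_const 1).indicator hs
  rw [integral_congr_ae (ae_of_all _ hdecomp), integral_sub (hint.const_mul 2)
    (integrable_const 1), integral_const_mul, integral_indicator_one hs]
  simp

lemma ProbabilityTheory.IndepFun.integral_indicator_preimage {ι : Type*} [MeasurableSpace ι]
    {f : Ω → ℝ} {g : Ω → ι} (hfg : IndepFun f g μ) (hf : AEStronglyMeasurable f μ)
    (hg : Measurable g) {s : Set ι} (hs : MeasurableSet s) :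
    ∫ ω, (g ⁻¹' s).indicator f ω ∂μ = (∫ ω, f ω ∂μ) * μ.real (g ⁻¹' s) := by
  have hprod : (g ⁻¹' s).indicator f = f * (s.indicator (1 : ι → ℝ) ∘ g) := by
    funext ω
    by_cases h : g ω ∈ s <;> simp [h]
  have hcomp : s.indicator (1 : ι → ℝ) ∘ g = (g ⁻¹' s).indicator 1 := by
    funext ω
    by_cases h : g ω ∈ s <;> simp [h]
  have hind : IndepFun f (s.indicator (1 : ι → ℝ) ∘ g) μ :=
    hfg.comp measurable_id (measurable_one.indicator hs)
  rw [hprod, hind.integral_mul_eq_mul_integral hf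
    ((measurable_one.indicator hs).comp hg).aestronglyMeasurable, hcomp,
    integral_indicator_one (hg hs)]

lemma condExp_mul_eq_mul_integral_of_indep [IsFiniteMeasure μ] {m₁ m₂ : MeasurableSpace Ω}
    (hle₁ : m₁ ≤ mΩ) (hle₂ : m₂ ≤ mΩ) (hind : Indep m₁ m₂ μ) {f g : Ω → ℝ}
    (hf : StronglyMeasurable[m₂] f) {C : ℝ} (hfC : ∀ᵐ ω ∂μ, ‖f ω‖ ≤ C)
    (hg : StronglyMeasurable[m₁] g) (hgint : Integrable g μ) :
    μ[f * g | m₂] =ᵐ[μ] fun ω => f ω * ∫ ω, g ω ∂μ := by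
  filter_upwards [condExp_stronglyMeasurable_mul_of_bound hle₂ hf hgint C hfC,
    condExp_indep_eq hle₁ hle₂ hg hind] with ω h₁ h₂
  rw [h₁, Pi.mul_apply, h₂]


theorem erw_condExp_step [IsFiniteMeasure μ] {X : ℕ → Ω → ℝ} {α Y : Ω → ℝ} {β : Ω → ℕ}
    {n : ℕ} {C : ℝ}
    (hXmeas : ∀ k, Measurable (X k)) (hXbd : ∀ k ∈ Icc 1 n, ∀ ω, ‖X k ω‖ ≤ C)
    (hαmeas : Measurable α) (hαint : Integrable α μ) (hβmeas : Measurable β)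
    (hβrange : ∀ ω, β ω ∈ Set.Icc 1 n)
    (hβlaw : ∀ k ∈ Set.Icc 1 n, μ {ω | β ω = k} = (n : ℝ≥0∞)⁻¹)
    (hαβ : IndepFun α β μ)
    (hindep : Indep (MeasurableSpace.comap (fun ω => (α ω, β ω)) inferInstance)
      (MeasurableSpace.comap (fun ω (i : Fin n) => X (i + 1) ω) inferInstance) μ)
    (hY : ∀ ω, Y ω = α ω * X (β ω) ω) :
    μ[Y | MeasurableSpace.comap (fun ω (i : Fin n) => X (i + 1) ω) inferInstance]
      =ᵐ[μ] fun ω => (∫ ω, α ω ∂μ) / n * ∑ k ∈ Icc 1 n, X k ω := by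
  have hF : MeasurableSpace.comap (fun ω (i : Fin n) => X (i + 1) ω) inferInstance ≤ mΩ :=
    (measurable_pi_lambda (fun ω (i : Fin n) => X (i + 1) ω) fun i => hXmeas (i + 1)).comap_le
  have hpair_le := (hαmeas.prodMk hβmeas).comap_le
  set Z : ℕ → Ω → ℝ := fun k => (β ⁻¹' {k}).indicator α
  have hZ_sm (k : ℕ) :
      StronglyMeasurable[MeasurableSpace.comap (fun ω => (α ω, β ω)) inferInstance] (Z k) :=
    ((measurable_fst.indicator (measurable_snd (measurableSet_singleton k))).comp
      (comap_measurable _)).stronglyMeasurable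
  have hZ_mean : ∀ k ∈ Icc 1 n, ∫ ω, Z k ω ∂μ = (∫ ω, α ω ∂μ) / n := by
    intro k hk
    rw [hαβ.integral_indicator_preimage hαint.1 hβmeas (measurableSet_singleton k),
      measureReal_def]
    simp only [Set.preimage, Set.mem_singleton_iff]
    rw [hβlaw k (by simpa using hk)]
    simp [div_eq_mul_inv]
  have hY_sum : Y = ∑ k ∈ Icc 1 n, X k * Z k := by
    classical
    funext ω
    simp only [Z, Finset.sum_apply, Pi.mul_apply, Set.indicator_apply, Set.mem_preimage,
      Set.mem_singleton_iff, mul_ite, mul_zero, Finset.sum_ite_eq]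
    rw [if_pos (by simpa using hβrange ω), hY, mul_comm]
  have hterm : ∀ k ∈ Icc 1 n,
      μ[X k * Z k | MeasurableSpace.comap (fun ω (i : Fin n) => X (i + 1) ω) inferInstance]
        =ᵐ[μ] fun ω => X k ω * ((∫ ω, α ω ∂μ) / n) := fun k hk => by
    rw [← hZ_mean k hk]
    exact condExp_mul_eq_mul_integral_of_indep hpair_le hF hindep
      (measurable_comap_pi_fin_of_mem_Icc X hk).stronglyMeasurable
      (ae_of_all _ (hXbd k hk)) (hZ_sm k) (hαint.indicator (hβmeas (measurableSet_singleton k)))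
  have hint : ∀ k ∈ Icc 1 n, Integrable (X k * Z k) μ := fun k hk =>
    (hαint.indicator (hβmeas (measurableSet_singleton k))).bdd_mul
      (hXmeas k).aestronglyMeasurable (ae_of_all _ (hXbd k hk))
  rw [hY_sum]
  filter_upwards [condExp_finsetSum hint _, (eventually_all_finset _).2 hterm] with ω h₁ h₂
  rw [h₁, Finset.sum_apply, Finset.sum_congr rfl h₂, ← Finset.sum_mul, mul_comm]

end

lemma erw_normalizer_succ {p : ℝ} (hp : 0 < p) {a : ℕ → ℝ}
    (ha : ∀ n ≥ 1, a n = Real.Gamma n * Real.Gamma (2 * p) / Real.Gamma (n + 2 * p - 1))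
    {n : ℕ} (hn : 1 ≤ n) :
    a (n + 1) * (1 + (2 * p - 1) / n) = a n := by
  have hn' : (1 : ℝ) ≤ n := by exact_mod_cast hn
  rw [ha n hn, ha (n + 1) (by omega), Nat.cast_succ, show (n : ℝ) + 1 + 2 * p - 1 =
    n + (2 * p - 1) + 1 by ring, show (n : ℝ) + 2 * p - 1 = n + (2 * p - 1) by ring,
    mul_div_right_comm, mul_right_comm, Gamma_ratio_succ (by positivity) (by linarith),
    mul_div_right_comm]

theorem erw_martingale_general
    {Ω : Type*} [m0 : MeasurableSpace Ω] (μ : Measure Ω) [IsProbabilityMeasure μ]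
    (p : ℝ) (hp : p ∈ Set.Ioc (0 : ℝ) 1)
    (X : ℕ → Ω → ℝ) (α : ℕ → Ω → ℝ) (β : ℕ → Ω → ℕ)
    (hXmeas : ∀ i, Measurable (X i))
    (hαmeas : ∀ n, Measurable (α n)) (hβmeas : ∀ n, Measurable (β n))
    (hX1pm : ∀ ω, X 1 ω = 1 ∨ X 1 ω = -1)
    (hrec : ∀ n ≥ 1, ∀ ω, X (n + 1) ω = α n ω * X (β n ω) ω)
    (hαpm : ∀ n, ∀ ω, α n ω = 1 ∨ α n ω = -1)
    (hαlaw : ∀ n, μ {ω | α n ω = 1} = ENNReal.ofReal p)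
    (hβrange : ∀ n ≥ 1, ∀ ω, β n ω ∈ Set.Icc 1 n)
    (hβlaw : ∀ n ≥ 1, ∀ k ∈ Set.Icc 1 n, μ {ω | β n ω = k} = (n : ℝ≥0∞)⁻¹)
    (hαβindep : ∀ n ≥ 1, IndepFun (α n) (β n) μ)
    (hindep : ∀ n ≥ 1,
      Indep (MeasurableSpace.comap (fun ω => (α n ω, β n ω)) inferInstance)
        (MeasurableSpace.comap (fun ω => fun i : Fin n => X (i + 1) ω) inferInstance) μ)
    -- a_n and M_n
    (a : ℕ → ℝ)
    (ha : ∀ n ≥ 1, a n = Real.Gamma n * Real.Gamma (2 * p) / Real.Gamma (n + 2 * p - 1))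
    (M : ℕ → Ω → ℝ)
    (hM : ∀ n ω, M n ω = a n * ∑ k ∈ Finset.Icc 1 n, X k ω)
    (n : ℕ) (hn : 1 ≤ n) :
    μ[M (n + 1) |
        MeasurableSpace.comap (fun ω => fun i : Fin n => X (i + 1) ω) inferInstance]
      =ᵐ[μ] M n := by
  set S : Ω → ℝ := fun ω => ∑ k ∈ Icc 1 n, X k ω
  have hnorm := erw_norm_eq_one hX1pm hrec hαpm hβrange
  have hint (k : ℕ) (hk : 1 ≤ k) : Integrable (X k) μ :=
    .of_bound (hXmeas k).aestronglyMeasurable 1 (ae_of_all _ fun ω => (hnorm k hk ω).le)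
  have hαint : Integrable (α n) μ := .of_bound (hαmeas n).aestronglyMeasurable 1
    (ae_of_all _ fun ω => by rcases hαpm n ω with h | h <;> simp [h])
  have hαmean : ∫ ω, α n ω ∂μ = 2 * p - 1 := by
    rw [integral_eq_two_mul_measureReal_sub_one (hαmeas n) (hαpm n), measureReal_def,
      hαlaw n, ENNReal.toReal_ofReal hp.1.le]
  have hstep := erw_condExp_step (C := 1) hXmeas
    (fun k hk ω => (hnorm k (Finset.mem_Icc.1 hk).1 ω).le) (hαmeas n) hαint (hβmeas n)
    (hβrange n hn) (hβlaw n hn) (hαβindep n hn) (hindep n hn) (hrec n hn)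
  have hSint : Integrable S μ := integrable_finsetSum _ fun k hk => hint k (Finset.mem_Icc.1 hk).1
  have hS : μ[S | MeasurableSpace.comap (fun ω (i : Fin n) => X (i + 1) ω) inferInstance] = S :=
    condExp_of_stronglyMeasurable
      (measurable_pi_lambda (fun ω (i : Fin n) => X (i + 1) ω) fun i => hXmeas (i + 1)).comap_le
      (Finset.stronglyMeasurable_fun_sum _ fun k hk =>
        (measurable_comap_pi_fin_of_mem_Icc X hk).stronglyMeasurable) hSint
  have hMsucc : M (n + 1) = a (n + 1) • (S + X (n + 1)) := by
    funext ω
    rw [hM, Finset.sum_Icc_succ_top (by omega)]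
    rfl
  rw [hMsucc]
  filter_upwards [condExp_smul (a (n + 1)) (S + X (n + 1)) _,
    condExp_add hSint (hint (n + 1) (by omega)) _, hstep] with ω h₁ h₂ h₃
  rw [h₁, Pi.smul_apply, h₂, Pi.add_apply, hS, h₃, hαmean, hM, smul_eq_mul,
    ← erw_normalizer_succ hp.1 ha hn]
  ring

/-- For the elephant random walk with memory parameter `p ∈ (0,1]`, the process
`M_n = a_n S_n` with `a_n = Γ(n)Γ(2p)/Γ(n+2p-1)` is a martingale with respect to
`F_n = σ(X_1, …, X_n)`, i.e. `E[M_{n+1} | F_n] = M_n` a.s. -/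
theorem erw_martingale
    {Ω : Type*} [m0 : MeasurableSpace Ω] (μ : Measure Ω) [IsProbabilityMeasure μ]
    (p q : ℝ) (hp : p ∈ Set.Ioc (0 : ℝ) 1) (hq : q ∈ Set.Icc (0 : ℝ) 1)
    (X : ℕ → Ω → ℝ) (α : ℕ → Ω → ℝ) (β : ℕ → Ω → ℕ)
    (hXmeas : ∀ i, Measurable (X i))
    (hαmeas : ∀ n, Measurable (α n)) (hβmeas : ∀ n, Measurable (β n))
    (hX1pm : ∀ ω, X 1 ω = 1 ∨ X 1 ω = -1)
    (hX1law : μ {ω | X 1 ω = 1} = ENNReal.ofReal q)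
    (hrec : ∀ n ≥ 1, ∀ ω, X (n + 1) ω = α n ω * X (β n ω) ω)
    (hαpm : ∀ n, ∀ ω, α n ω = 1 ∨ α n ω = -1)
    (hαlaw : ∀ n, μ {ω | α n ω = 1} = ENNReal.ofReal p)
    (hβrange : ∀ n ≥ 1, ∀ ω, β n ω ∈ Set.Icc 1 n)
    (hβlaw : ∀ n ≥ 1, ∀ k ∈ Set.Icc 1 n, μ {ω | β n ω = k} = (n : ℝ≥0∞)⁻¹)
    (hαβindep : ∀ n ≥ 1, IndepFun (α n) (β n) μ)
    (hindep : ∀ n ≥ 1,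
      Indep (MeasurableSpace.comap (fun ω => (α n ω, β n ω)) inferInstance)
        (MeasurableSpace.comap (fun ω => fun i : Fin n => X (i + 1) ω) inferInstance) μ)
    -- a_n and M_n
    (a : ℕ → ℝ)
    (ha : ∀ n ≥ 1, a n = Real.Gamma n * Real.Gamma (2 * p) / Real.Gamma (n + 2 * p - 1))
    (M : ℕ → Ω → ℝ)
    (hM : ∀ n ω, M n ω = a n * ∑ k ∈ Finset.Icc 1 n, X k ω)
    (n : ℕ) (hn : 1 ≤ n) :
    μ[M (n + 1) |
        MeasurableSpace.comap (fun ω => fun i : Fin n => X (i + 1) ω) inferInstance]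
      =ᵐ[μ] M n :=
  erw_martingale_general (m0 := m0) μ p hp X α β hXmeas hαmeas hβmeas hX1pm hrec hαpm hαlaw hβrange
    hβlaw hαβindep hindep a ha M hM n hn
end

section
/- With ε_{n+1} = S_{n+1} - γ_n S_n as above, for all n ≥ 1, E[ε_{n+1}^4 | F_n] = 1 - 3(2p-1)^4 (S_n/n)^4 + 2(2p-1)^2 (S_n/n)^2 almost surely; in particular E[ε_{n+1}^4 | F_n] ≤ 4/3 almost surely. -/
open MeasureTheory ProbabilityTheory Real Filter Finset

/-!
Write `c = (2p-1) S_n / n`, so that `ε_{n+1} = X_{n+1} - c` and `E[X_{n+1} | F_n] = c`.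
Since `X_{n+1}² = 1`, the fourth power `(X_{n+1} - c)⁴` is affine in `X_{n+1}` with
`F_n`-measurable coefficients, so its conditional expectation is obtained by replacing
`X_{n+1}` with `c`; this gives `1 + 2c² - 3c⁴`, whose maximum over `c² ∈ ℝ` is `4/3`.
Integrability comes for free: `|c| ≤ 1` a.e. because `c` is the conditional expectation of
a `±1`-valued variable.
-/

theorem sub_pow_four_of_sq_eq_one {y : ℝ} (hy : y ^ 2 = 1) (c : ℝ) :
    (y - c) ^ 4 = (1 + 6 * c ^ 2 + c ^ 4) + (-4 * c * (1 + c ^ 2)) * y := by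
  linear_combination (y ^ 2 + 1 - 4 * c * y + 6 * c ^ 2) * hy

theorem one_sub_three_mul_pow_four_add_two_mul_sq_le (t : ℝ) :
    1 - 3 * t ^ 4 + 2 * t ^ 2 ≤ 4 / 3 := by
  nlinarith [sq_nonneg (3 * t ^ 2 - 1)]

section CondExp

variable {Ω : Type*} {m m0 : MeasurableSpace Ω} {μ : Measure Ω}

theorem condExp_add_mul_of_stronglyMeasurable (hm : m ≤ m0) [SigmaFinite (μ.trim hm)]
    {g h Y : Ω → ℝ} (hg : StronglyMeasurable[m] g) (hgi : Integrable g μ)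
    (hh : StronglyMeasurable[m] h) (hhY : Integrable (h * Y) μ) (hY : Integrable Y μ) :
    μ[g + h * Y | m] =ᵐ[μ] g + h * μ[Y | m] := by
  refine (condExp_add hgi hhY m).trans ?_
  rw [condExp_of_stronglyMeasurable hm hg hgi]
  exact (condExp_mul_of_stronglyMeasurable_left hh hhY hY).add_left

theorem condExp_sub_pow_four_of_sq_eq_one [IsFiniteMeasure μ] (hm : m ≤ m0)
    {Y c : Ω → ℝ} (hYm : AEStronglyMeasurable Y μ) (hY : ∀ ω, Y ω ^ 2 = 1)
    (hc : StronglyMeasurable[m] c) (hYc : μ[Y | m] =ᵐ[μ] c) :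
    μ[fun ω => (Y ω - c ω) ^ 4 | m] =ᵐ[μ] fun ω => 1 - 3 * c ω ^ 4 + 2 * c ω ^ 2 := by
  have hY1 : ∀ ω, |Y ω| ≤ 1 := fun ω => by rw [← sq_le_one_iff_abs_le_one, hY ω]
  have hc1 : ∀ᵐ ω ∂μ, |c ω| ≤ 1 := by
    filter_upwards [ae_bdd_abs_condExp_of_ae_bdd_abs (m := m) (ae_of_all μ hY1), hYc]
      with ω hω hωc
    simpa [hωc] using hω
  set g : Ω → ℝ := fun ω => 1 + 6 * c ω ^ 2 + c ω ^ 4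
  set h : Ω → ℝ := fun ω => -4 * c ω * (1 + c ω ^ 2)
  have hgm : StronglyMeasurable[m] g := by fun_prop
  have hhm : StronglyMeasurable[m] h := by fun_prop
  have hYi : Integrable Y μ := .of_bound hYm 1 (ae_of_all μ fun ω => by simpa using hY1 ω)
  have hbound : ∀ᵐ ω ∂μ, ‖g ω‖ ≤ 8 ∧ ‖h ω‖ ≤ 8 := by
    filter_upwards [hc1] with ω hω
    obtain ⟨hl, hu⟩ := abs_le.mp hω
    have hc2 : c ω ^ 2 ≤ 1 := by nlinarith
    simp only [Real.norm_eq_abs, abs_le, g, h]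
    refine ⟨⟨?_, ?_⟩, ?_, ?_⟩ <;>
      nlinarith [sq_nonneg (c ω), mul_nonneg (sq_nonneg (c ω)) (sub_nonneg.mpr hc2)]
  have hgi : Integrable g μ :=
    .of_bound (hgm.mono hm).aestronglyMeasurable 8 (hbound.mono fun _ => And.left)
  have hhYi : Integrable (h * Y) μ :=
    hYi.bdd_mul (hhm.mono hm).aestronglyMeasurable (hbound.mono fun _ => And.right)
  have hexpand : (fun ω => (Y ω - c ω) ^ 4) = g + h * Y :=
    funext fun ω => sub_pow_four_of_sq_eq_one (hY ω) (c ω)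
  rw [hexpand]
  filter_upwards [condExp_add_mul_of_stronglyMeasurable hm hgm hgi hhm hhYi hYi, hYc]
    with ω hω hωc
  simp only [hω, Pi.add_apply, Pi.mul_apply, hωc, g, h]
  ring

end CondExp

theorem measurable_sum_Icc_of_adapted {Ω : Type*} {ℱ : ℕ → MeasurableSpace Ω}
    (hmono : Monotone ℱ) {X : ℕ → Ω → ℝ} (hadp : ∀ i, Measurable[ℱ i] (X i)) (n : ℕ) :
    Measurable[ℱ n] fun ω => ∑ k ∈ Icc 1 n, X k ω :=
  Finset.measurable_sum _ fun k hk => (hadp k).mono (hmono (mem_Icc.mp hk).2) le_rfl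

theorem erw_condexp_eps_four_general
    {Ω : Type*} [m0 : MeasurableSpace Ω] (μ : Measure Ω) [IsProbabilityMeasure μ]
    (p : ℝ)
    (ℱ : ℕ → MeasurableSpace Ω) (hℱ : ∀ n, ℱ n ≤ m0) (hmono : Monotone ℱ)
    (X : ℕ → Ω → ℝ)
    (hadp : ∀ i, Measurable[ℱ i] (X i))
    (hpm : ∀ i ≥ 1, ∀ ω, X i ω = 1 ∨ X i ω = -1)
    (S : ℕ → Ω → ℝ) (hS : ∀ n ω, S n ω = ∑ k ∈ Finset.Icc 1 n, X k ω)
    (ε : ℕ → Ω → ℝ)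
    (hε : ∀ n ≥ 1, ∀ ω, ε (n + 1) ω = S (n + 1) ω - (((n : ℝ) + 2 * p - 1) / n) * S n ω)
    (hCE : ∀ n ≥ 1, μ[X (n + 1) | ℱ n] =ᵐ[μ] fun ω => (2 * p - 1) * S n ω / n)
    (n : ℕ) (hn : 1 ≤ n) :
    (μ[fun ω => (ε (n + 1) ω) ^ 4 | ℱ n]
      =ᵐ[μ] fun ω => 1 - 3 * (2 * p - 1) ^ 4 * (S n ω / n) ^ 4
        + 2 * (2 * p - 1) ^ 2 * (S n ω / n) ^ 2)
    ∧ ∀ᵐ ω ∂μ, (μ[fun ω => (ε (n + 1) ω) ^ 4 | ℱ n]) ω ≤ 4 / 3 := by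
  have hSm : Measurable[ℱ n] (S n) := by
    simpa only [← hS] using measurable_sum_Icc_of_adapted hmono hadp n
  have hεX : ∀ ω, ε (n + 1) ω = X (n + 1) ω - (2 * p - 1) * S n ω / n := fun ω => by
    have hn0 : (n : ℝ) ≠ 0 := by positivity
    rw [hε n hn ω, hS (n + 1), sum_Icc_succ_top (by omega), ← hS n]
    field_simp
    ring
  have hX2 : ∀ ω, X (n + 1) ω ^ 2 = 1 := fun ω => by
    rcases hpm (n + 1) (by omega) ω with h | h <;> norm_num [h]
  have hcond := condExp_sub_pow_four_of_sq_eq_one (hℱ n)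
    ((hadp (n + 1)).mono (hℱ (n + 1)) le_rfl).aestronglyMeasurable hX2
    (by fun_prop : StronglyMeasurable[ℱ n] fun ω => (2 * p - 1) * S n ω / n) (hCE n hn)
  simp only [← hεX] at hcond
  have hformula : μ[fun ω => (ε (n + 1) ω) ^ 4 | ℱ n] =ᵐ[μ] fun ω =>
      1 - 3 * (2 * p - 1) ^ 4 * (S n ω / n) ^ 4 + 2 * (2 * p - 1) ^ 2 * (S n ω / n) ^ 2 :=
    hcond.trans (ae_of_all μ fun ω => by ring)
  refine ⟨hformula, hcond.mono fun ω hω => ?_⟩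
  rw [hω]
  exact one_sub_three_mul_pow_four_add_two_mul_sq_le _

/-- With `ε_{n+1} = S_{n+1} - γ_n S_n`,
`E[ε_{n+1}⁴ | F_n] = 1 - 3(2p-1)⁴ (S_n/n)⁴ + 2(2p-1)² (S_n/n)²` a.s.,
and in particular `E[ε_{n+1}⁴ | F_n] ≤ 4/3` a.s. -/
theorem erw_condexp_eps_four
    {Ω : Type*} [m0 : MeasurableSpace Ω] (μ : Measure Ω) [IsProbabilityMeasure μ]
    (p : ℝ) (hp : p ∈ Set.Icc (0 : ℝ) 1)
    (ℱ : ℕ → MeasurableSpace Ω) (hℱ : ∀ n, ℱ n ≤ m0) (hmono : Monotone ℱ)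
    (X : ℕ → Ω → ℝ)
    (hadp : ∀ i, Measurable[ℱ i] (X i))
    (hpm : ∀ i ≥ 1, ∀ ω, X i ω = 1 ∨ X i ω = -1)
    (S : ℕ → Ω → ℝ) (hS : ∀ n ω, S n ω = ∑ k ∈ Finset.Icc 1 n, X k ω)
    (ε : ℕ → Ω → ℝ)
    (hε : ∀ n ≥ 1, ∀ ω, ε (n + 1) ω = S (n + 1) ω - (((n : ℝ) + 2 * p - 1) / n) * S n ω)
    (hCE : ∀ n ≥ 1, μ[X (n + 1) | ℱ n] =ᵐ[μ] fun ω => (2 * p - 1) * S n ω / n)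
    (n : ℕ) (hn : 1 ≤ n) :
    (μ[fun ω => (ε (n + 1) ω) ^ 4 | ℱ n]
      =ᵐ[μ] fun ω => 1 - 3 * (2 * p - 1) ^ 4 * (S n ω / n) ^ 4
        + 2 * (2 * p - 1) ^ 2 * (S n ω / n) ^ 2)
    ∧ ∀ᵐ ω ∂μ, (μ[fun ω => (ε (n + 1) ω) ^ 4 | ℱ n]) ω ≤ 4 / 3 :=
  erw_condexp_eps_four_general (m0 := m0) μ p ℱ hℱ hmono X hadp hpm S hS ε hε hCE n hn
end

section
/- Let a_n = Γ(n)Γ(2p)/Γ(n+2p-1) and v_n = Σ_{k=1}^n a_k^2. If 0 ≤ p < 3/4, then v_n / n^{3-4p} converges to (Γ(2p))^2 / (3 - 4p) as n → ∞. -/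
open Real Finset Filter Topology Asymptotics

/-!
Euler's limit formula `GammaSeq s n → Γ(s)` gives `Γ(n+1)/Γ(n+s) ~ n^(1-s)`, hence
`a_{n+1}² ~ Γ(2p)² n^(2-4p)`. A sequence `u_n ~ c n^α` with `α > -1` is then summed by comparing
it with the increments `(n+1)^β - n^β ~ β n^α` (`β = α + 1 > 0`): their partial sums telescope to
`n^β`, and little-o relations against a positive divergent series survive summation.
-/

theorem Finset.sum_Icc_one_eq_sum_range {M : Type*} [AddCommMonoid M] (f : ℕ → M) (n : ℕ) :
    ∑ k ∈ Icc 1 n, f k = ∑ i ∈ range n, f (i + 1) := by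
  rw [← Ico_add_one_right_eq_Icc, sum_Ico_eq_sum_range]
  simp [add_comm]

theorem tendsto_mul_one_add_inv_rpow_sub_one (β : ℝ) :
    Tendsto (fun x : ℝ => x * ((1 + x⁻¹) ^ β - 1)) atTop (𝓝 β) := by
  have hderiv : HasDerivAt (fun t : ℝ => (1 + t) ^ β) β 0 := by
    simpa using ((hasDerivAt_id (0 : ℝ)).const_add 1).rpow_const (p := β) (by simp)
  have := hderiv.tendsto_slope_zero_right.comp tendsto_inv_atTop_nhdsGT_zero
  simpa [Function.comp_def] using this

theorem tendsto_rpow_add_one_sub_rpow_div_rpow (β : ℝ) :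
    Tendsto (fun n : ℕ => (((n : ℝ) + 1) ^ β - (n : ℝ) ^ β) / (n : ℝ) ^ (β - 1))
      atTop (𝓝 β) := by
  refine ((tendsto_mul_one_add_inv_rpow_sub_one β).comp tendsto_natCast_atTop_atTop).congr' ?_
  filter_upwards [eventually_gt_atTop 0] with n hn
  have hn : (0 : ℝ) < n := by exact_mod_cast hn
  have hsplit : ((n : ℝ) + 1) ^ β = (n : ℝ) ^ β * (1 + (n : ℝ)⁻¹) ^ β := by
    rw [← mul_rpow hn.le (by positivity), mul_add, mul_inv_cancel₀ hn.ne', mul_one]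
  rw [Function.comp_apply, hsplit, rpow_sub_one hn.ne']
  field_simp

theorem prod_range_add_eq_Gamma_div {s : ℝ} (hs : ∀ m : ℕ, s ≠ -m) (n : ℕ) :
    ∏ j ∈ range n, (s + j) = Gamma (s + n) / Gamma s := by
  induction n with
  | zero => simp [div_self (Gamma_ne_zero hs)]
  | succ n ih =>
    have hsn : s + n ≠ 0 := fun h => hs n (by linarith)
    rw [prod_range_succ, ih, Nat.cast_succ, ← add_assoc, Gamma_add_one hsn]
    ring

theorem tendsto_Gamma_nat_add_one_div_Gamma_div_rpow {s : ℝ} (hs : ∀ m : ℕ, s ≠ -m) :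
    Tendsto (fun n : ℕ => Gamma (n + 1) / Gamma (n + s) / (n : ℝ) ^ (1 - s)) atTop (𝓝 1) := by
  have hΓ : Gamma s ≠ 0 := Gamma_ne_zero hs
  have hlin : Tendsto (fun n : ℕ => 1 + s / n) atTop (𝓝 1) := by
    simpa using tendsto_const_nhds.add (tendsto_const_div_atTop_nhds_zero_nat s)
  have := ((GammaSeq_tendsto_Gamma s).div_const (Gamma s)).mul hlin
  rw [div_self hΓ, one_mul] at this
  refine this.congr' ?_
  filter_upwards [eventually_gt_atTop 0] with n hn
  have hn : (0 : ℝ) < n := by exact_mod_cast hn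
  have hsn : s + n ≠ 0 := fun h => hs n (by linarith)
  have hΓsn : Gamma (s + n) ≠ 0 := Gamma_ne_zero fun m h => hs (n + m) (by push_cast; linarith)
  rw [GammaSeq, prod_range_add_eq_Gamma_div hs, Nat.cast_succ, ← add_assoc, Gamma_add_one hsn,
    ← Gamma_nat_eq_factorial, rpow_sub hn, rpow_one, add_comm (n : ℝ) s]
  field_simp
  ring

theorem tendsto_sum_range_div_rpow {u : ℕ → ℝ} {α c : ℝ} (hα : -1 < α)
    (hu : Tendsto (fun n : ℕ => u n / (n : ℝ) ^ α) atTop (𝓝 c)) :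
    Tendsto (fun n : ℕ => (∑ i ∈ range n, u i) / (n : ℝ) ^ (α + 1)) atTop (𝓝 (c / (α + 1))) := by
  set β := α + 1 with hβ_def
  have hβ : 0 < β := by linarith
  set w : ℕ → ℝ := fun n => ((n : ℝ) + 1) ^ β - (n : ℝ) ^ β
  have hw_pos : ∀ n, 0 < w n := fun n =>
    sub_pos.mpr (rpow_lt_rpow n.cast_nonneg (lt_add_one _) hβ)
  have hw_sum : ∀ n, ∑ i ∈ range n, w i = (n : ℝ) ^ β := fun n => by
    simpa [w, zero_rpow hβ.ne'] using sum_range_sub (fun i : ℕ => (i : ℝ) ^ β) n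
  have hw : Tendsto (fun n : ℕ => w n / (n : ℝ) ^ α) atTop (𝓝 β) := by
    simpa [hβ_def] using tendsto_rpow_add_one_sub_rpow_div_rpow β
  have hsmall : (fun n => u n - c / β * w n) =o[atTop] w := by
    rw [isLittleO_iff_tendsto' (.of_forall fun n h => absurd h (hw_pos n).ne')]
    have := (hu.div hw hβ.ne').sub_const (c / β)
    rw [sub_self] at this
    refine this.congr' ?_
    filter_upwards [eventually_gt_atTop 0] with n hn
    have : (0 : ℝ) < (n : ℝ) ^ α := rpow_pos_of_pos (by exact_mod_cast hn) α
    simp only [Pi.div_apply]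
    field_simp [(hw_pos n).ne']
  have hw_sum_top : Tendsto (fun n => ∑ i ∈ range n, w i) atTop atTop := by
    simpa only [hw_sum, Function.comp_def] using
      (tendsto_rpow_atTop hβ).comp tendsto_natCast_atTop_atTop
  have hsum := (hsmall.sum_range (fun n => (hw_pos n).le) hw_sum_top).tendsto_div_nhds_zero
  have := hsum.add_const (c / β)
  rw [zero_add] at this
  refine this.congr' ?_
  filter_upwards [eventually_gt_atTop 0] with n hn
  have : (0 : ℝ) < (n : ℝ) ^ β := rpow_pos_of_pos (by exact_mod_cast hn) β
  rw [sum_sub_distrib, ← mul_sum, hw_sum]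
  field_simp
  ring

/-- Diffusive regime `0 < p < 3/4`: with `a_n = Γ(n)Γ(2p)/Γ(n+2p-1)` and
`v_n = Σ_{k=1}^n a_k²`, we have `v_n / n^{3-4p} → Γ(2p)² / (3-4p)`. -/
theorem erw_vn_diffusive (p : ℝ) (hp0 : 0 < p) (hp1 : p < 3 / 4) :
    Tendsto
      (fun n : ℕ =>
        (∑ k ∈ Finset.Icc 1 n,
            (Real.Gamma k * Real.Gamma (2 * p) / Real.Gamma (k + 2 * p - 1)) ^ 2)
          / (n : ℝ) ^ (3 - 4 * p))
      atTop (nhds ((Real.Gamma (2 * p)) ^ 2 / (3 - 4 * p))) := by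
  have h2p : ∀ m : ℕ, 2 * p ≠ -m := fun m h => by linarith [(m.cast_nonneg : (0 : ℝ) ≤ m)]
  have hterm : Tendsto (fun n : ℕ => (Gamma (n + 1) * Gamma (2 * p) / Gamma (n + 1 + 2 * p - 1)) ^ 2
      / (n : ℝ) ^ (2 - 4 * p)) atTop (𝓝 (Gamma (2 * p) ^ 2)) := by
    have := ((tendsto_Gamma_nat_add_one_div_Gamma_div_rpow h2p).const_mul (Gamma (2 * p))).pow 2
    rw [mul_one] at this
    refine this.congr fun n => ?_
    rw [show (2 : ℝ) - 4 * p = (1 - 2 * p) * (2 : ℕ) by push_cast; ring,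
      rpow_mul_natCast n.cast_nonneg, show (n : ℝ) + 1 + 2 * p - 1 = n + 2 * p by ring]
    ring
  have := tendsto_sum_range_div_rpow (by linarith) hterm
  rw [show (2 : ℝ) - 4 * p + 1 = 3 - 4 * p by ring] at this
  refine this.congr fun n => ?_
  simp only [sum_Icc_one_eq_sum_range, Nat.cast_add, Nat.cast_one]
end

section
/- Let a_n = Γ(n)Γ(3/2)/Γ(n+1/2) (the case p = 3/4) and v_n = Σ_{k=1}^n a_k^2. Then v_n / log n → π/4 as n → ∞. -/
/-!
Since `a (k + 1) / a k = 2k / (2k + 1)` and `a 1 = 1`, the quantity `(2k + 1) a (k + 1)²` is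
exactly the `k`-th partial product of Wallis' formula, so `k a_k² → π / 4`. Comparing `a_k²`
with `(π / 4) / k` term by term, `v_n` is `π / 4` times the harmonic number `H_n ~ log n`, up
to an error that is `o(H_n)`.
-/

open Real Finset Filter Topology Asymptotics

theorem Real.tendsto_harmonic_div_log :
    Tendsto (fun n : ℕ => (harmonic n : ℝ) / log n) atTop (𝓝 1) := by
  have hlog : Tendsto (fun n : ℕ => log n) atTop atTop :=
    tendsto_log_atTop.comp tendsto_natCast_atTop_atTop
  have h := (tendsto_harmonic_sub_log.div_atTop hlog).add_const 1
  rw [zero_add] at h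
  refine h.congr' ?_
  filter_upwards [hlog.eventually_gt_atTop 0] with n hn
  field_simp
  ring

theorem tendsto_sum_Icc_div_log_of_tendsto_mul {b : ℕ → ℝ} {c : ℝ}
    (h : Tendsto (fun n : ℕ => n * b n) atTop (𝓝 c)) :
    Tendsto (fun n : ℕ => (∑ k ∈ Icc 1 n, b k) / log n) atTop (𝓝 c) := by
  -- `b (i + 1) = r i * g i + c * g i` with `r → 0`; the partial sums of `g` are harmonic numbers.
  set g : ℕ → ℝ := fun i => 1 / ((i : ℝ) + 1)
  set r : ℕ → ℝ := fun i => ((i : ℝ) + 1) * b (i + 1) - c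
  have hr : Tendsto r atTop (𝓝 0) := by
    have := (h.comp (tendsto_add_atTop_nat 1)).sub_const c
    rw [sub_self] at this
    simpa [r, Function.comp_def] using this
  have hrg : (fun i => r i * g i) =o[atTop] g := by
    simpa using ((isLittleO_one_iff ℝ).2 hr).mul_isBigO (isBigO_refl g atTop)
  have hH : ∀ n, ∑ i ∈ range n, g i = harmonic n := by
    intro n
    simp [g, harmonic]
  have hsum : Tendsto (fun n => (∑ i ∈ range n, r i * g i) / harmonic n) atTop (𝓝 0) := by
    simpa only [hH] using (hrg.sum_range (fun i => by positivity)
      tendsto_sum_range_one_div_nat_succ_atTop).tendsto_div_nhds_zero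
  have hsplit : ∀ n, ∑ k ∈ Icc 1 n, b k = ∑ i ∈ range n, r i * g i + c * harmonic n := by
    intro n
    rw [← hH, mul_sum, ← sum_add_distrib, ← Ico_add_one_right_eq_Icc, sum_Ico_eq_sum_range,
      Nat.add_sub_cancel]
    refine sum_congr rfl fun i _ => ?_
    simp only [r, g, add_comm 1 i]
    field_simp
    ring
  have := (hsum.mul tendsto_harmonic_div_log).add (tendsto_harmonic_div_log.const_mul c)
  rw [zero_mul, zero_add, mul_one] at this
  refine this.congr' ?_
  filter_upwards [eventually_ge_atTop 1] with n hn
  have : (harmonic n : ℝ) ≠ 0 := by exact_mod_cast (harmonic_pos (by omega)).ne'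
  rw [hsplit]
  field_simp

theorem Gamma_nat_add_one_mul_Gamma_three_halves_div_eq_prod (k : ℕ) :
    Gamma (k + 1) * Gamma (3 / 2) / Gamma (k + 1 + 1 / 2) =
      ∏ i ∈ range k, (2 * i + 2 : ℝ) / (2 * i + 3) := by
  induction k with
  | zero =>
    norm_num
    exact (Gamma_pos_of_pos (by norm_num)).ne'
  | succ k ih =>
    rw [prod_range_succ, ← ih]
    push_cast
    have hk : (k : ℝ) + 1 + 1 / 2 ≠ 0 := by positivity
    rw [Gamma_add_one (by positivity), add_right_comm _ 1 (1 / 2), Gamma_add_one hk]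
    have := (Gamma_pos_of_pos (by positivity : (0 : ℝ) < k + 1 + 1 / 2)).ne'
    field_simp
    ring

theorem two_mul_add_one_mul_sq_prod_eq_wallis (k : ℕ) :
    (2 * k + 1) * (∏ i ∈ range k, (2 * i + 2 : ℝ) / (2 * i + 3)) ^ 2 = Wallis.W k := by
  induction k with
  | zero => simp [Wallis.W]
  | succ k ih =>
    rw [Wallis.W_succ, ← ih, prod_range_succ]
    push_cast
    field_simp
    ring

theorem tendsto_nat_mul_sq_Gamma_div :
    Tendsto (fun k : ℕ => k * (Gamma k * Gamma (3 / 2) / Gamma (k + 1 / 2)) ^ 2)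
      atTop (𝓝 (π / 4)) := by
  rw [← tendsto_add_atTop_iff_nat 1]
  -- `(k + 1) / (2k + 1) = (1 / 2) * (k + 1) / (k + 1 - 1 / 2)`
  have hratio :
      Tendsto (fun k : ℕ => ((k + 1 : ℕ) : ℝ) / ((k + 1 : ℕ) + -1 / 2)) atTop (𝓝 1) :=
    (tendsto_natCast_div_add_atTop _).comp (tendsto_add_atTop_nat 1)
  have := (hratio.const_mul (1 / 2)).mul Wallis.tendsto_W_nhds_pi_div_two
  rw [mul_one, one_div_mul_eq_div, div_div, show (2 : ℝ) * 2 = 4 by norm_num] at this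
  refine this.congr fun k => ?_
  rw [← two_mul_add_one_mul_sq_prod_eq_wallis,
    ← Gamma_nat_add_one_mul_Gamma_three_halves_div_eq_prod]
  push_cast
  rw [show (k : ℝ) + 1 + -1 / 2 = (2 * k + 1) / 2 by ring]
  have : (2 * k + 1 : ℝ) ≠ 0 := by positivity
  field_simp

/-- Critical regime `p = 3/4`: with `a_n = Γ(n)Γ(3/2)/Γ(n+1/2)` and
`v_n = Σ_{k=1}^n a_k²`, we have `v_n / log n → π/4`. -/
theorem erw_vn_critical :
    Tendsto
      (fun n : ℕ =>
        (∑ k ∈ Finset.Icc 1 n,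
            (Real.Gamma k * Real.Gamma (3 / 2) / Real.Gamma (k + 1 / 2)) ^ 2)
          / Real.log n)
      atTop (nhds (Real.pi / 4)) :=
  tendsto_sum_Icc_div_log_of_tendsto_mul tendsto_nat_mul_sq_Gamma_div
end

section
/- For the ERW with memory parameter p ∈ (1/2,1], the third moment satisfies the recursion E[S_{n+1}^3] = ((3n+α)/n) E[S_n] + ((n+3α)/n) E[S_n^3] with α = 2p-1, and for p ≠ 3/4 it has the closed form E[S_n^3] = (β/((2α-1)Γ(n))) · (3(α+1)Γ(n+3α)/Γ(3α+1) − (Γ(n+α)/Γ(α+1))(3n+α+1)), where β = 2q-1. -/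
/-!
Since `X (n + 1) = ±1`, `S (n + 1)³ = S n³ + 3 S n² X (n + 1) + 3 S n + X (n + 1)`. Pulling the
`ℱ n`-measurable factors `S n²` and `1` out of `E[X (n + 1) | ℱ n] = α S n / n` gives
`E[S n² X (n + 1)] = (α / n) E[S n³]` and `E[X (n + 1)] = (α / n) E[S n]`, hence the recursion
for the third moment and `E[S (n + 1)] = ((n + α) / n) E[S n]`. The Gamma expressions satisfy the
same recursions because `Γ(x + 1) = x Γ(x)`, and at `n = 1` both moments equal `E[X 1] = β`.
-/

open MeasureTheory ProbabilityTheory Real Finset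

section ClosedForm

variable (α β : ℝ)

noncomputable def erwMean (n : ℕ) : ℝ :=
  β * Gamma (n + α) / (Gamma n * Gamma (α + 1))

noncomputable def erwThirdMoment (n : ℕ) : ℝ :=
  (β / ((2 * α - 1) * Gamma n))
    * (3 * (α + 1) * Gamma (n + 3 * α) / Gamma (3 * α + 1)
      - (Gamma (n + α) / Gamma (α + 1)) * (3 * (n : ℝ) + α + 1))

lemma Real.Gamma_natCast_succ_add (n : ℕ) (c : ℝ) (h : (n : ℝ) + c ≠ 0) :
    Gamma ((n + 1 : ℕ) + c) = (n + c) * Gamma (n + c) := by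
  rw [Nat.cast_succ, add_right_comm, Gamma_add_one h]

variable {α}

lemma erwMean_one (hα : -1 < α) : erwMean α β 1 = β := by
  have : Gamma (α + 1) ≠ 0 := (Gamma_pos_of_pos (by linarith)).ne'
  simp [erwMean, add_comm (1 : ℝ), this]

lemma erwMean_succ (hα : -1 < α) {n : ℕ} (hn : 1 ≤ n) :
    erwMean α β (n + 1) = ((n + α) / n) * erwMean α β n := by
  have hn' : (1 : ℝ) ≤ n := by exact_mod_cast hn
  have hGn : Gamma n ≠ 0 := (Gamma_pos_of_pos (by linarith)).ne'
  have hGα : Gamma (α + 1) ≠ 0 := (Gamma_pos_of_pos (by linarith)).ne'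
  rw [erwMean, erwMean, Real.Gamma_natCast_succ_add n α (by linarith), Nat.cast_succ,
    Gamma_add_one (by linarith)]
  field_simp

lemma erwThirdMoment_one (hα : -1 / 3 < α) (h2α : 2 * α - 1 ≠ 0) :
    erwThirdMoment α β 1 = β := by
  have hGα : Gamma (α + 1) ≠ 0 := (Gamma_pos_of_pos (by linarith)).ne'
  have hG3α : Gamma (3 * α + 1) ≠ 0 := (Gamma_pos_of_pos (by linarith)).ne'
  rw [erwThirdMoment, Nat.cast_one, Gamma_one, add_comm 1 (3 * α), add_comm 1 α, mul_div_assoc,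
    div_self hG3α, div_self hGα]
  field_simp
  ring

/-- The Gamma terms match because
`(n + 3α)(3n + α + 1) - (n + α)(3n + α + 4) = (2α - 1)(3n + α)`. -/
lemma erwThirdMoment_succ (hα : -1 / 3 < α) (h2α : 2 * α - 1 ≠ 0) {n : ℕ} (hn : 1 ≤ n) :
    erwThirdMoment α β (n + 1)
      = ((3 * n + α) / n) * erwMean α β n + ((n + 3 * α) / n) * erwThirdMoment α β n := by
  have hn' : (1 : ℝ) ≤ n := by exact_mod_cast hn
  have hGn : Gamma n ≠ 0 := (Gamma_pos_of_pos (by linarith)).ne'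
  have hGα : Gamma (α + 1) ≠ 0 := (Gamma_pos_of_pos (by linarith)).ne'
  have hG3α : Gamma (3 * α + 1) ≠ 0 := (Gamma_pos_of_pos (by linarith)).ne'
  rw [erwThirdMoment, erwThirdMoment, erwMean, Real.Gamma_natCast_succ_add n α (by linarith),
    Real.Gamma_natCast_succ_add n (3 * α) (by linarith), Nat.cast_succ,
    Gamma_add_one (by linarith)]
  field_simp
  ring

end ClosedForm

lemma add_pow_three_of_sq_eq_one {R : Type*} [CommRing R] (s : R) {x : R} (hx : x ^ 2 = 1) :
    (s + x) ^ 3 = s ^ 3 + 3 * (s ^ 2 * x) + 3 * s + x := by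
  linear_combination (3 * s + x) * hx

theorem integral_mul_eq_of_condExp_ae_eq {Ω : Type*} {m m0 : MeasurableSpace Ω} {μ : Measure Ω}
    (hm : m ≤ m0) [SigmaFinite (μ.trim hm)] {f Y g : Ω → ℝ} (hf : StronglyMeasurable[m] f)
    (hfY : Integrable (f * Y) μ) (hY : Integrable Y μ) (hYg : μ[Y | m] =ᵐ[μ] g) :
    ∫ ω, f ω * Y ω ∂μ = ∫ ω, f ω * g ω ∂μ := calc
  ∫ ω, f ω * Y ω ∂μ = ∫ ω, (μ[f * Y | m]) ω ∂μ := (integral_condExp hm).symm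
  _ = ∫ ω, f ω * g ω ∂μ := by
    refine integral_congr_ae ((condExp_mul_of_stronglyMeasurable_left hf hfY hY).trans ?_)
    filter_upwards [hYg] with ω hω
    rw [Pi.mul_apply, hω]

section ElephantRandomWalk

variable {Ω : Type*} {ℱ : ℕ → MeasurableSpace Ω} {X S : ℕ → Ω → ℝ}

lemma partialSum_succ (hS : ∀ n ω, S n ω = ∑ k ∈ Icc 1 n, X k ω) (n : ℕ) (ω : Ω) :
    S (n + 1) ω = S n ω + X (n + 1) ω := by
  rw [hS, hS, sum_Icc_succ_top (by omega)]

lemma partialSum_one (hS : ∀ n ω, S n ω = ∑ k ∈ Icc 1 n, X k ω) (ω : Ω) : S 1 ω = X 1 ω := by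
  simp [hS]

lemma abs_partialSum_le (hpm : ∀ i ≥ 1, ∀ ω, X i ω = 1 ∨ X i ω = -1)
    (hS : ∀ n ω, S n ω = ∑ k ∈ Icc 1 n, X k ω) (n : ℕ) (ω : Ω) : |S n ω| ≤ n := calc
  |S n ω| ≤ ∑ k ∈ Icc 1 n, |X k ω| := (hS n ω).symm ▸ abs_sum_le_sum_abs _ _
  _ = ∑ k ∈ Icc 1 n, 1 := sum_congr rfl fun k hk => by
    rcases hpm k (mem_Icc.mp hk).1 ω with h | h <;> simp [h]
  _ = n := by simp

lemma measurable_partialSum (hmono : Monotone ℱ) (hadp : ∀ i, Measurable[ℱ i] (X i))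
    (hS : ∀ n ω, S n ω = ∑ k ∈ Icc 1 n, X k ω) (n : ℕ) : Measurable[ℱ n] (S n) := by
  rw [show S n = fun ω => ∑ k ∈ Icc 1 n, X k ω from funext (hS n)]
  exact Finset.measurable_sum _ fun k hk => (hadp k).mono (hmono (mem_Icc.mp hk).2) le_rfl

variable [m0 : MeasurableSpace Ω] {μ : Measure Ω} {α : ℝ}

/-- The elephant random walk with memory `p`, through the properties its moments depend on;
`α = 2p - 1`. -/
structure IsElephantRandomWalk (μ : Measure Ω) (α : ℝ) (ℱ : ℕ → MeasurableSpace Ω)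
    (X S : ℕ → Ω → ℝ) : Prop where
  le : ∀ n, ℱ n ≤ m0
  mono : Monotone ℱ
  adapted : ∀ i, Measurable[ℱ i] (X i)
  step : ∀ i ≥ 1, ∀ ω, X i ω = 1 ∨ X i ω = -1
  partialSum : ∀ n ω, S n ω = ∑ k ∈ Icc 1 n, X k ω
  condExp_step : ∀ n ≥ 1, μ[X (n + 1) | ℱ n] =ᵐ[μ] fun ω => α * S n ω / n

namespace IsElephantRandomWalk

lemma sq_step (h : IsElephantRandomWalk μ α ℱ X S) {i : ℕ} (hi : 1 ≤ i) (ω : Ω) :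
    X i ω ^ 2 = 1 := by
  rcases h.step i hi ω with hX | hX <;> simp [hX]

lemma stronglyMeasurable_partialSum_pow (h : IsElephantRandomWalk μ α ℱ X S) (n k : ℕ) :
    StronglyMeasurable[ℱ n] fun ω => S n ω ^ k :=
  ((measurable_partialSum h.mono h.adapted h.partialSum n).pow_const k).stronglyMeasurable

variable [IsFiniteMeasure μ]

lemma integrable_partialSum_pow (h : IsElephantRandomWalk μ α ℱ X S) (n k : ℕ) :
    Integrable (fun ω => S n ω ^ k) μ := by
  refine .of_bound ((h.stronglyMeasurable_partialSum_pow n k).mono (h.le n)).aestronglyMeasurable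
    ((n : ℝ) ^ k) (ae_of_all _ fun ω => ?_)
  rw [norm_pow, Real.norm_eq_abs]
  exact pow_le_pow_left₀ (abs_nonneg _) (abs_partialSum_le h.step h.partialSum n ω) k

lemma integrable_partialSum (h : IsElephantRandomWalk μ α ℱ X S) (n : ℕ) :
    Integrable (S n) μ := by
  simpa using h.integrable_partialSum_pow n 1

lemma integrable_step (h : IsElephantRandomWalk μ α ℱ X S) {i : ℕ} (hi : 1 ≤ i) :
    Integrable (X i) μ :=
  .of_bound ((h.adapted i).mono (h.le i) le_rfl).aestronglyMeasurable 1
    (ae_of_all _ fun ω => by rcases h.step i hi ω with hX | hX <;> simp [hX])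

lemma integrable_partialSum_sq_mul_step (h : IsElephantRandomWalk μ α ℱ X S) (n : ℕ) :
    Integrable (fun ω => S n ω ^ 2 * X (n + 1) ω) μ := by
  refine (h.integrable_step (by omega)).bdd_mul
    (h.integrable_partialSum_pow n 2).aestronglyMeasurable (c := (n : ℝ) ^ 2)
    (ae_of_all _ fun ω => ?_)
  rw [norm_pow, Real.norm_eq_abs]
  exact pow_le_pow_left₀ (abs_nonneg _) (abs_partialSum_le h.step h.partialSum n ω) 2

lemma integral_mul_step (h : IsElephantRandomWalk μ α ℱ X S) {n : ℕ} (hn : 1 ≤ n) {f : Ω → ℝ}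
    (hf : StronglyMeasurable[ℱ n] f) (hfX : Integrable (fun ω => f ω * X (n + 1) ω) μ) :
    ∫ ω, f ω * X (n + 1) ω ∂μ = α / n * ∫ ω, f ω * S n ω ∂μ := by
  rw [integral_mul_eq_of_condExp_ae_eq (h.le n) hf hfX (h.integrable_step (by omega))
    (h.condExp_step n hn), ← integral_const_mul]
  congr 1 with ω
  ring

lemma integral_step_succ (h : IsElephantRandomWalk μ α ℱ X S) {n : ℕ} (hn : 1 ≤ n) :
    ∫ ω, X (n + 1) ω ∂μ = α / n * ∫ ω, S n ω ∂μ := by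
  simpa using h.integral_mul_step hn (f := 1) stronglyMeasurable_const
    (by simpa using h.integrable_step (by omega))

lemma integral_partialSum_succ (h : IsElephantRandomWalk μ α ℱ X S) {n : ℕ} (hn : 1 ≤ n) :
    ∫ ω, S (n + 1) ω ∂μ = (n + α) / n * ∫ ω, S n ω ∂μ := by
  have hn0 : (n : ℝ) ≠ 0 := by positivity
  simp_rw [partialSum_succ h.partialSum]
  rw [integral_add (h.integrable_partialSum n) (h.integrable_step (by omega)),
    h.integral_step_succ hn]
  field_simp

lemma integral_partialSum_pow_three_succ (h : IsElephantRandomWalk μ α ℱ X S) {n : ℕ}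
    (hn : 1 ≤ n) :
    ∫ ω, S (n + 1) ω ^ 3 ∂μ
      = (3 * n + α) / n * ∫ ω, S n ω ∂μ + (n + 3 * α) / n * ∫ ω, S n ω ^ 3 ∂μ := by
  have hn0 : (n : ℝ) ≠ 0 := by positivity
  have hX := h.integrable_step (i := n + 1) (by omega)
  have hS2X := h.integrable_partialSum_sq_mul_step n
  have hS2X_eq : ∫ ω, S n ω ^ 2 * X (n + 1) ω ∂μ = α / n * ∫ ω, S n ω ^ 3 ∂μ := by
    rw [h.integral_mul_step hn (h.stronglyMeasurable_partialSum_pow n 2) hS2X]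
    simp_rw [← pow_succ]
  calc ∫ ω, S (n + 1) ω ^ 3 ∂μ
      = ∫ ω, S n ω ^ 3 + 3 * (S n ω ^ 2 * X (n + 1) ω) + 3 * S n ω + X (n + 1) ω ∂μ := by
        congr 1 with ω
        rw [partialSum_succ h.partialSum, add_pow_three_of_sq_eq_one _ (h.sq_step (by omega) ω)]
    _ = ∫ ω, S n ω ^ 3 ∂μ + 3 * ∫ ω, S n ω ^ 2 * X (n + 1) ω ∂μ + 3 * ∫ ω, S n ω ∂μ
          + ∫ ω, X (n + 1) ω ∂μ := by
        have hS3 := h.integrable_partialSum_pow n 3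
        have h3S2X : Integrable (fun ω => 3 * (S n ω ^ 2 * X (n + 1) ω)) μ := hS2X.const_mul 3
        have h3S : Integrable (fun ω => 3 * S n ω) μ := (h.integrable_partialSum n).const_mul 3
        have h12 : Integrable (fun ω => S n ω ^ 3 + 3 * (S n ω ^ 2 * X (n + 1) ω)) μ :=
          hS3.add h3S2X
        have h123 : Integrable
            (fun ω => S n ω ^ 3 + 3 * (S n ω ^ 2 * X (n + 1) ω) + 3 * S n ω) μ := h12.add h3S
        rw [integral_add h123 hX, integral_add h12 h3S, integral_add hS3 h3S2X,
          integral_const_mul, integral_const_mul]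
    _ = _ := by
        rw [hS2X_eq, h.integral_step_succ hn]
        field_simp
        ring

lemma integral_partialSum (h : IsElephantRandomWalk μ α ℱ X S) {β : ℝ}
    (hβ : ∫ ω, X 1 ω ∂μ = β) (hα : -1 < α) {n : ℕ} (hn : 1 ≤ n) :
    ∫ ω, S n ω ∂μ = erwMean α β n := by
  induction n, hn using Nat.le_induction with
  | base => simp_rw [partialSum_one h.partialSum, hβ, erwMean_one β hα]
  | succ n hn ih => rw [h.integral_partialSum_succ hn, ih, erwMean_succ β hα hn]

lemma integral_partialSum_pow_three (h : IsElephantRandomWalk μ α ℱ X S) {β : ℝ}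
    (hβ : ∫ ω, X 1 ω ∂μ = β) (hα : -1 / 3 < α) (h2α : 2 * α - 1 ≠ 0) {n : ℕ} (hn : 1 ≤ n) :
    ∫ ω, S n ω ^ 3 ∂μ = erwThirdMoment α β n := by
  induction n, hn using Nat.le_induction with
  | base =>
    have hX3 (ω : Ω) : S 1 ω ^ 3 = X 1 ω := by
      rw [partialSum_one h.partialSum, pow_succ, h.sq_step le_rfl, one_mul]
    simp_rw [hX3, hβ, erwThirdMoment_one β hα h2α]
  | succ n hn ih =>
    rw [h.integral_partialSum_pow_three_succ hn, ih, h.integral_partialSum hβ (by linarith) hn,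
      erwThirdMoment_succ β hα h2α hn]

end IsElephantRandomWalk

end ElephantRandomWalk

theorem erw_third_moment_general
    {Ω : Type*} [m0 : MeasurableSpace Ω] (μ : Measure Ω) [IsProbabilityMeasure μ]
    (p q : ℝ) (hp : p ∈ Set.Ioc (1 / 2 : ℝ) 1)
    (ℱ : ℕ → MeasurableSpace Ω) (hℱ : ∀ n, ℱ n ≤ m0) (hmono : Monotone ℱ)
    (X : ℕ → Ω → ℝ)
    (hadp : ∀ i, Measurable[ℱ i] (X i))
    (hpm : ∀ i ≥ 1, ∀ ω, X i ω = 1 ∨ X i ω = -1)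
    (S : ℕ → Ω → ℝ) (hS : ∀ n ω, S n ω = ∑ k ∈ Finset.Icc 1 n, X k ω)
    (hCE : ∀ n ≥ 1, μ[X (n + 1) | ℱ n] =ᵐ[μ] fun ω => (2 * p - 1) * S n ω / n)
    (hmean1 : ∫ ω, X 1 ω ∂μ = 2 * q - 1) :
    (∀ n ≥ 1,
      ∫ ω, (S (n + 1) ω) ^ 3 ∂μ
        = ((3 * (n : ℝ) + (2 * p - 1)) / n) * ∫ ω, S n ω ∂μ
          + (((n : ℝ) + 3 * (2 * p - 1)) / n) * ∫ ω, (S n ω) ^ 3 ∂μ)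
    ∧ (p ≠ 3 / 4 → ∀ n ≥ 1,
        ∫ ω, (S n ω) ^ 3 ∂μ
          = ((2 * q - 1) / ((2 * (2 * p - 1) - 1) * Real.Gamma n))
              * (3 * ((2 * p - 1) + 1) * Real.Gamma (n + 3 * (2 * p - 1))
                    / Real.Gamma (3 * (2 * p - 1) + 1)
                 - (Real.Gamma (n + (2 * p - 1)) / Real.Gamma ((2 * p - 1) + 1))
                    * (3 * (n : ℝ) + (2 * p - 1) + 1))) := by
  have h : IsElephantRandomWalk μ (2 * p - 1) ℱ X S := ⟨hℱ, hmono, hadp, hpm, hS, hCE⟩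
  refine ⟨fun n hn => h.integral_partialSum_pow_three_succ hn, fun hp34 n hn => ?_⟩
  have h2α : 2 * (2 * p - 1) - 1 ≠ 0 := fun h0 => hp34 (by linarith)
  exact h.integral_partialSum_pow_three hmean1 (by linarith [hp.1]) h2α hn

/-- For the ERW with `p ∈ (1/2,1]`, writing `α = 2p-1` and `β = 2q-1`, the third moment
satisfies the recursion `E[S_{n+1}³] = ((3n+α)/n) E[S_n] + ((n+3α)/n) E[S_n³]`, and for
`p ≠ 3/4` it has the closed form
`E[S_n³] = (β/((2α-1)Γ(n))) (3(α+1)Γ(n+3α)/Γ(3α+1) − (Γ(n+α)/Γ(α+1))(3n+α+1))`. -/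
theorem erw_third_moment
    {Ω : Type*} [m0 : MeasurableSpace Ω] (μ : Measure Ω) [IsProbabilityMeasure μ]
    (p q : ℝ) (hp : p ∈ Set.Ioc (1 / 2 : ℝ) 1) (hq : q ∈ Set.Icc (0 : ℝ) 1)
    (ℱ : ℕ → MeasurableSpace Ω) (hℱ : ∀ n, ℱ n ≤ m0) (hmono : Monotone ℱ)
    (X : ℕ → Ω → ℝ)
    (hadp : ∀ i, Measurable[ℱ i] (X i))
    (hpm : ∀ i ≥ 1, ∀ ω, X i ω = 1 ∨ X i ω = -1)
    (S : ℕ → Ω → ℝ) (hS : ∀ n ω, S n ω = ∑ k ∈ Finset.Icc 1 n, X k ω)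
    (hCE : ∀ n ≥ 1, μ[X (n + 1) | ℱ n] =ᵐ[μ] fun ω => (2 * p - 1) * S n ω / n)
    (hmean1 : ∫ ω, X 1 ω ∂μ = 2 * q - 1) :
    (∀ n ≥ 1,
      ∫ ω, (S (n + 1) ω) ^ 3 ∂μ
        = ((3 * (n : ℝ) + (2 * p - 1)) / n) * ∫ ω, S n ω ∂μ
          + (((n : ℝ) + 3 * (2 * p - 1)) / n) * ∫ ω, (S n ω) ^ 3 ∂μ)
    ∧ (p ≠ 3 / 4 → ∀ n ≥ 1,
        ∫ ω, (S n ω) ^ 3 ∂μ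
          = ((2 * q - 1) / ((2 * (2 * p - 1) - 1) * Real.Gamma n))
              * (3 * ((2 * p - 1) + 1) * Real.Gamma (n + 3 * (2 * p - 1))
                    / Real.Gamma (3 * (2 * p - 1) + 1)
                 - (Real.Gamma (n + (2 * p - 1)) / Real.Gamma ((2 * p - 1) + 1))
                    * (3 * (n : ℝ) + (2 * p - 1) + 1))) :=
  erw_third_moment_general (m0 := m0) μ p q hp ℱ hℱ hmono X hadp hpm S hS hCE hmean1
end

section
/- In the superdiffusive regime 3/4 < p ≤ 1, the martingale M_n = a_n S_n is bounded in L^2: sup_{n≥1} E[M_n^2] ≤ ₃F₂(1,1,1; 2p,2p; 1) < ∞. More precisely, E[M_n^2] ≤ Σ_{k=1}^n a_k^2 for every n. -/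
/-!
Conditioning on `ℱ n` turns the drift of the walk into the exact recursion
`E[S_{n+1}²] = (1 + 2s/n) E[S_n²] + 1` with `s = 2p - 1`, while `a_{n+1} = n/(n+s) · a_n` and
`n (n + 2s) ≤ (n + s)²` give `a_{n+1}² (1 + 2s/n) ≤ a_n²`; hence `E[M_n²]` grows by at most
`a_{n+1}²` per step. Log-convexity of `Γ` gives `a_{k+1} ≤ Γ(2p) k^{-s}`, which is square-summable
exactly when `p > 3/4`.
-/

open MeasureTheory ProbabilityTheory Real Finset

namespace Real

theorem Gamma_add_one_div_Gamma_add_one_add_le_rpow {x s : ℝ} (hx : 0 < x) (hs0 : 0 ≤ s)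
    (hs1 : s ≤ 1) : Gamma (x + 1) / Gamma (x + 1 + s) ≤ x ^ (-s) := by
  have hxs : 0 < x + s := by linarith
  have hrec : Gamma (x + 1 + s) = (x + s) * Gamma (x + s) := by
    rw [add_right_comm, Gamma_add_one hxs.ne']
  have hconv : log (Gamma (x + 1))
      ≤ s * log (Gamma (x + s)) + (1 - s) * log (Gamma (x + 1 + s)) := by
    have := convexOn_log_Gamma.2 (Set.mem_Ioi.2 hxs)
      (Set.mem_Ioi.2 (by linarith : 0 < x + 1 + s)) hs0 (by linarith : 0 ≤ 1 - s) (by ring)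
    rwa [show s • (x + s) + (1 - s) • (x + 1 + s) = x + 1 by simp only [smul_eq_mul]; ring]
      at this
  have hlog : log (Gamma (x + 1 + s)) = log (x + s) + log (Gamma (x + s)) := by
    rw [hrec, log_mul hxs.ne' (Gamma_pos_of_pos hxs).ne']
  have hratio : 0 < Gamma (x + 1) / Gamma (x + 1 + s) :=
    div_pos (Gamma_pos_of_pos (by linarith)) (Gamma_pos_of_pos (by linarith))
  calc Gamma (x + 1) / Gamma (x + 1 + s) ≤ (x + s) ^ (-s) := by
        rw [← log_le_log_iff hratio (rpow_pos_of_pos hxs _), log_rpow hxs,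
          log_div (Gamma_pos_of_pos (by linarith)).ne' (Gamma_pos_of_pos (by linarith)).ne']
        linear_combination hconv - s * hlog
    _ ≤ x ^ (-s) := rpow_le_rpow_of_nonpos hx (by linarith) (by linarith)

theorem summable_sq_Gamma_add_one_div_Gamma_add_one_add {s : ℝ} (hs : 1 / 2 < s) (hs1 : s ≤ 1) :
    Summable fun k : ℕ => (Gamma (k + 1) / Gamma (k + 1 + s)) ^ 2 := by
  refine .of_norm_bounded_eventually_nat (g := fun k : ℕ => (k : ℝ) ^ (-s + -s))
    (summable_nat_rpow.2 (by linarith)) ?_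
  filter_upwards [Filter.eventually_ge_atTop 1] with k hk
  have hk : (0 : ℝ) < k := by exact_mod_cast hk
  have hratio : 0 ≤ Gamma (k + 1) / Gamma (k + 1 + s) :=
    div_nonneg (Gamma_pos_of_pos (by linarith)).le (Gamma_pos_of_pos (by linarith)).le
  rw [norm_pow, norm_of_nonneg hratio, rpow_add hk, ← sq]
  gcongr
  exact Gamma_add_one_div_Gamma_add_one_add_le_rpow hk (by linarith) hs1

theorem Gamma_add_one_div_Gamma_add_one_add {x r : ℝ} (hx : x ≠ 0) (hxr : x + r ≠ 0) :
    Gamma (x + 1) / Gamma (x + 1 + r) = x / (x + r) * (Gamma x / Gamma (x + r)) := by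
  rw [add_right_comm, Gamma_add_one hx, Gamma_add_one hxr, mul_div_mul_comm]

end Real

theorem sq_div_add_mul_one_add_le_one (x r : ℝ) : (x / (x + r)) ^ 2 * (1 + 2 * (r / x)) ≤ 1 := by
  rcases eq_or_ne x 0 with rfl | hx
  · simp
  rcases eq_or_ne (x + r) 0 with hxr | hxr
  · simp [hxr]
  rw [div_pow, div_mul_eq_mul_div, div_le_one (by positivity)]
  field_simp
  nlinarith [sq_nonneg r]

theorem sq_mul_le_sum_sq_of_le_mul_add_one {a v c : ℕ → ℝ} (hv : ∀ n, 0 ≤ v n) (hv1 : v 1 ≤ 1)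
    (hvc : ∀ n ≥ 1, v (n + 1) ≤ c n * v n + 1) (hac : ∀ n ≥ 1, a (n + 1) ^ 2 * c n ≤ a n ^ 2) :
    ∀ n ≥ 1, a n ^ 2 * v n ≤ ∑ k ∈ Icc 1 n, a k ^ 2 := by
  intro n hn
  induction n, hn using Nat.le_induction with
  | base => simpa using mul_le_mul_of_nonneg_left hv1 (sq_nonneg (a 1))
  | succ n hn ih =>
    rw [sum_Icc_succ_top (by omega)]
    calc a (n + 1) ^ 2 * v (n + 1) ≤ a (n + 1) ^ 2 * (c n * v n + 1) :=
          mul_le_mul_of_nonneg_left (hvc n hn) (sq_nonneg _)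
      _ = a (n + 1) ^ 2 * c n * v n + a (n + 1) ^ 2 := by ring
      _ ≤ a n ^ 2 * v n + a (n + 1) ^ 2 := by gcongr; exacts [hv n, hac n hn]
      _ ≤ _ := by gcongr

section ConditionalDrift

variable {Ω : Type*} {m m0 : MeasurableSpace Ω} {μ : Measure Ω}

theorem integral_mul_condExp_of_stronglyMeasurable (hm : m ≤ m0) [SigmaFinite (μ.trim hm)]
    {f g : Ω → ℝ} (hf : StronglyMeasurable[m] f) (hfg : Integrable (f * g) μ)
    (hg : Integrable g μ) : ∫ ω, f ω * μ[g|m] ω ∂μ = ∫ ω, f ω * g ω ∂μ := by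
  conv_rhs => rw [← integral_condExp hm]
  exact integral_congr_ae (condExp_mul_of_stronglyMeasurable_left hf hfg hg).symm

theorem integral_sq_add_of_condExp_eq_const_mul [IsProbabilityMeasure μ] (hm : m ≤ m0)
    {Y ξ : Ω → ℝ} {c : ℝ} (hYm : StronglyMeasurable[m] Y) (hY : MemLp Y 2 μ)
    (hξm : AEStronglyMeasurable ξ μ) (hξ : ∀ ω, ξ ω ^ 2 = 1)
    (hcond : μ[ξ|m] =ᵐ[μ] fun ω => c * Y ω) :
    ∫ ω, (Y ω + ξ ω) ^ 2 ∂μ = (1 + 2 * c) * ∫ ω, Y ω ^ 2 ∂μ + 1 := by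
  have hξbd : ∀ᵐ ω ∂μ, ‖ξ ω‖ ≤ 1 := ae_of_all _ fun ω => by
    rw [Real.norm_eq_abs, ← sq_le_one_iff_abs_le_one, hξ]
  have hYξ : Integrable (Y * ξ) μ := (hY.integrable one_le_two).mul_bdd hξm hξbd
  have hcross : ∫ ω, Y ω * ξ ω ∂μ = c * ∫ ω, Y ω ^ 2 ∂μ := by
    rw [← integral_mul_condExp_of_stronglyMeasurable hm hYm hYξ (.of_bound hξm 1 hξbd),
      ← integral_const_mul]
    refine integral_congr_ae ?_
    filter_upwards [hcond] with ω hω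
    rw [hω]; ring
  have hexpand : (fun ω => (Y ω + ξ ω) ^ 2) = fun ω => (Y ω ^ 2 + 2 * (Y ω * ξ ω)) + 1 := by
    ext ω; linear_combination hξ ω
  have hYξ2 : Integrable (fun ω => 2 * (Y ω * ξ ω)) μ := hYξ.const_mul 2
  have hsum : Integrable (fun ω => Y ω ^ 2 + 2 * (Y ω * ξ ω)) μ := hY.integrable_sq.add hYξ2
  rw [hexpand, integral_add hsum (integrable_const 1),
    integral_add hY.integrable_sq hYξ2, integral_const_mul, hcross]
  simp only [integral_const, probReal_univ, smul_eq_mul, mul_one]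
  ring

end ConditionalDrift

theorem abs_sum_Icc_le_of_eq_one_or_eq_neg_one {Ω : Type*} {X : ℕ → Ω → ℝ}
    (hpm : ∀ i ≥ 1, ∀ ω, X i ω = 1 ∨ X i ω = -1) (n : ℕ) (ω : Ω) : |∑ k ∈ Icc 1 n, X k ω| ≤ n := by
  calc |∑ k ∈ Icc 1 n, X k ω| ≤ ∑ k ∈ Icc 1 n, |X k ω| := abs_sum_le_sum_abs _ _
    _ = ∑ k ∈ Icc 1 n, (1 : ℝ) := sum_congr rfl fun k hk => by
          rcases hpm k (mem_Icc.1 hk).1 ω with h | h <;> simp [h]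
    _ = n := by simp

section ElephantRandomWalk

variable {Ω : Type*} [m0 : MeasurableSpace Ω] {μ : Measure Ω} {ℱ : ℕ → MeasurableSpace Ω}
  {X S : ℕ → Ω → ℝ}

theorem integral_sq_walk_succ [IsProbabilityMeasure μ] (hℱ : ∀ n, ℱ n ≤ m0)
    (hmono : Monotone ℱ) (hadp : ∀ i, Measurable[ℱ i] (X i))
    (hpm : ∀ i ≥ 1, ∀ ω, X i ω = 1 ∨ X i ω = -1) (hS : ∀ n ω, S n ω = ∑ k ∈ Icc 1 n, X k ω)
    {c : ℝ} {n : ℕ} (hCE : μ[X (n + 1) | ℱ n] =ᵐ[μ] fun ω => c * S n ω / n) :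
    ∫ ω, S (n + 1) ω ^ 2 ∂μ = (1 + 2 * (c / n)) * ∫ ω, S n ω ^ 2 ∂μ + 1 := by
  have hSm : StronglyMeasurable[ℱ n] (S n) := by
    rw [funext (hS n)]
    exact (Finset.measurable_sum _ fun k hk =>
      (hadp k).mono (hmono (mem_Icc.1 hk).2) le_rfl).stronglyMeasurable
  have hSL2 : MemLp (S n) 2 μ :=
    .of_bound (hSm.mono (hℱ n)).aestronglyMeasurable n
      (ae_of_all _ fun ω => by
        rw [Real.norm_eq_abs, hS]; exact abs_sum_Icc_le_of_eq_one_or_eq_neg_one hpm n ω)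
  have hsucc : ∀ ω, S (n + 1) ω = S n ω + X (n + 1) ω := fun ω => by
    rw [hS, hS, sum_Icc_succ_top (by omega)]
  simp_rw [hsucc]
  refine integral_sq_add_of_condExp_eq_const_mul (hℱ n) hSm hSL2
    ((hadp _).mono (hℱ _) le_rfl).aestronglyMeasurable
    (fun ω => sq_eq_one_iff.2 (hpm _ (by omega) ω)) ?_
  filter_upwards [hCE] with ω hω
  rw [hω]; ring

theorem integral_sq_walk_one [IsProbabilityMeasure μ]
    (hpm : ∀ i ≥ 1, ∀ ω, X i ω = 1 ∨ X i ω = -1) (hS : ∀ n ω, S n ω = ∑ k ∈ Icc 1 n, X k ω) :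
    ∫ ω, S 1 ω ^ 2 ∂μ = 1 := by
  simp [hS, sq_eq_one_iff.2 (hpm 1 le_rfl _)]

end ElephantRandomWalk

/-- Superdiffusive regime `3/4 < p ≤ 1`: the martingale `M_n = a_n S_n` is bounded in `L²`:
`E[M_n²] ≤ Σ_{k=1}^n a_k²` for every `n ≥ 1`, and
`sup_{n≥1} E[M_n²] ≤ ₃F₂(1,1,1;2p,2p;1) = Σ_{k≥0} (Γ(k+1)Γ(2p)/Γ(k+2p))² < ∞`. -/
theorem erw_L2_bounded
    {Ω : Type*} [m0 : MeasurableSpace Ω] (μ : Measure Ω) [IsProbabilityMeasure μ]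
    (p : ℝ) (hp : p ∈ Set.Ioc (3 / 4 : ℝ) 1)
    (ℱ : ℕ → MeasurableSpace Ω) (hℱ : ∀ n, ℱ n ≤ m0) (hmono : Monotone ℱ)
    (X : ℕ → Ω → ℝ)
    (hadp : ∀ i, Measurable[ℱ i] (X i))
    (hpm : ∀ i ≥ 1, ∀ ω, X i ω = 1 ∨ X i ω = -1)
    (S : ℕ → Ω → ℝ) (hS : ∀ n ω, S n ω = ∑ k ∈ Finset.Icc 1 n, X k ω)
    (hCE : ∀ n ≥ 1, μ[X (n + 1) | ℱ n] =ᵐ[μ] fun ω => (2 * p - 1) * S n ω / n)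
    (a : ℕ → ℝ)
    (ha : ∀ n ≥ 1, a n = Real.Gamma n * Real.Gamma (2 * p) / Real.Gamma (n + 2 * p - 1))
    (M : ℕ → Ω → ℝ) (hM : ∀ n ω, M n ω = a n * S n ω) :
    (∀ n ≥ 1, ∫ ω, (M n ω) ^ 2 ∂μ ≤ ∑ k ∈ Finset.Icc 1 n, (a k) ^ 2)
    ∧ Summable (fun k : ℕ =>
        (Real.Gamma (k + 1) * Real.Gamma (2 * p) / Real.Gamma (k + 2 * p)) ^ 2)
    ∧ (∀ n ≥ 1, ∫ ω, (M n ω) ^ 2 ∂μ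
        ≤ ∑' k : ℕ,
            (Real.Gamma (k + 1) * Real.Gamma (2 * p) / Real.Gamma (k + 2 * p)) ^ 2) := by
  obtain ⟨hp34, hp1⟩ := hp
  have hrec : ∀ n ≥ 1, a (n + 1) = n / (n + (2 * p - 1)) * a n := fun n hn => by
    have hn' : (0 : ℝ) < n := by exact_mod_cast hn
    rw [ha n hn, ha (n + 1) (by omega), Nat.cast_add_one, add_sub_assoc, add_sub_assoc,
      mul_div_right_comm, mul_div_right_comm,
      Gamma_add_one_div_Gamma_add_one_add hn'.ne' (by linarith), mul_assoc]
  have hshift : ∀ k : ℕ, a (k + 1) = Gamma (k + 1) * Gamma (2 * p) / Gamma (k + 2 * p) :=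
    fun k => by rw [ha (k + 1) (by omega)]; push_cast; ring_nf
  have hM2 : ∀ n, ∫ ω, M n ω ^ 2 ∂μ = a n ^ 2 * ∫ ω, S n ω ^ 2 ∂μ := fun n => by
    simp_rw [hM, mul_pow]; exact integral_const_mul _ _
  have hbound : ∀ n ≥ 1, ∫ ω, M n ω ^ 2 ∂μ ≤ ∑ k ∈ Icc 1 n, a k ^ 2 := fun n hn => by
    rw [hM2]
    refine sq_mul_le_sum_sq_of_le_mul_add_one (c := fun n => 1 + 2 * ((2 * p - 1) / n))
      (fun n => integral_nonneg fun _ => sq_nonneg _) (integral_sq_walk_one hpm hS).le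
      (fun n hn => (integral_sq_walk_succ hℱ hmono hadp hpm hS (hCE n hn)).le)
      (fun n hn => ?_) n hn
    rw [hrec n hn, mul_pow, mul_right_comm]
    exact mul_le_of_le_one_left (sq_nonneg _) (sq_div_add_mul_one_add_le_one _ _)
  have hsummable : Summable fun k : ℕ =>
      (Gamma (k + 1) * Gamma (2 * p) / Gamma (k + 2 * p)) ^ 2 :=
    ((summable_sq_Gamma_add_one_div_Gamma_add_one_add (s := 2 * p - 1) (by linarith)
      (by linarith)).mul_left (Gamma (2 * p) ^ 2)).congr fun k => by
        rw [show (k : ℝ) + 1 + (2 * p - 1) = k + 2 * p by ring]; ring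
  refine ⟨hbound, hsummable, fun n hn => (hbound n hn).trans ?_⟩
  rw [← Ico_add_one_right_eq_Icc, ← sum_Ico_add' _ 0 n 1]
  simp_rw [hshift]
  exact hsummable.sum_le_tsum _ fun k _ => sq_nonneg _
end

section
/- In the superdiffusive regime 3/4 < p ≤ 1, the martingale M_n = a_n S_n is bounded in L^4: E[M_n^4] ≤ 6(1 + Σ_{k=1}^n a_k^2) Σ_{k=1}^n a_k^2 for all n, and hence sup_{n≥1} E[M_n^4] < ∞. -/
open MeasureTheory ProbabilityTheory Real Finset

/-!
Write `γ = 2p - 1`. Since `X (n + 1) = ±1` has conditional mean `γ S_n / n`, expanding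
`(S_n + X_{n+1})^k` and pulling out the `ℱ n`-measurable factors gives exact recursions for
`E S_n²` and `E S_n⁴`. The weights satisfy `a_{n+1} (1 + γ/n) = a_n`, so Bernoulli's inequality
gives `a_{n+1}^k (1 + kγ/n) ≤ a_n^k`, which turns these recursions into
`E M_{n+1}² ≤ E M_n² + a_{n+1}²` and `E M_{n+1}⁴ ≤ E M_n⁴ + 6 a_{n+1}² E M_n² + a_{n+1}⁴`;
the bound follows by induction. For `p > 3/4` the case `k = 2` makes
`(4p - 3) Σ_{k ≤ n} a_k² + n a_n²` nonincreasing, so `Σ a_k² ≤ (4p - 2)/(4p - 3)`.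
-/

lemma pow_mul_one_add_mul_le {x y δ : ℝ} (hx : 0 ≤ x) (hδ : 0 ≤ δ) (h : y * (1 + δ) = x)
    (k : ℕ) : y ^ k * (1 + k * δ) ≤ x ^ k := by
  have hy : 0 ≤ y := nonneg_of_mul_nonneg_left (h ▸ hx) (by linarith)
  rw [← h, mul_pow]
  exact mul_le_mul_of_nonneg_left (one_add_mul_le_pow (by linarith) k) (pow_nonneg hy k)

lemma sum_Icc_le_of_succ_mul_le {b : ℕ → ℝ} {c : ℝ} (hc : 0 < c) (hb : ∀ n, 0 ≤ b n)
    (h : ∀ n ≥ 1, b (n + 1) * (n + 1 + c) ≤ b n * n) (n : ℕ) :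
    ∑ k ∈ Icc 1 n, b k ≤ (1 + c) / c * b 1 := by
  have telescope : ∀ n ≥ 1, c * ∑ k ∈ Icc 1 n, b k + n * b n ≤ (1 + c) * b 1 := by
    intro n hn
    induction n, hn using Nat.le_induction with
    | base => simp; linarith
    | succ n hn ih =>
      rw [sum_Icc_succ_top (by omega)]
      push_cast
      linarith [h n hn]
  rw [div_mul_eq_mul_div, le_div_iff₀ hc]
  rcases Nat.eq_zero_or_pos n with rfl | hn
  · simp only [Icc_eq_empty_of_lt zero_lt_one, sum_empty, zero_mul]
    nlinarith [hb 1]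
  · nlinarith [telescope n hn, hb n]

lemma moments_le_of_recursion {u v b : ℕ → ℝ} (hb : ∀ n, 0 ≤ b n) (hu₁ : u 1 ≤ b 1)
    (hv₁ : v 1 ≤ b 1 ^ 2) (hu : ∀ n ≥ 1, u (n + 1) ≤ u n + b (n + 1))
    (hv : ∀ n ≥ 1, v (n + 1) ≤ v n + 6 * b (n + 1) * u n + b (n + 1) ^ 2) (n : ℕ) (hn : 1 ≤ n) :
    u n ≤ ∑ k ∈ Icc 1 n, b k ∧ v n ≤ 6 * (1 + ∑ k ∈ Icc 1 n, b k) * ∑ k ∈ Icc 1 n, b k := by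
  induction n, hn using Nat.le_induction with
  | base =>
    simp only [Icc_self, sum_singleton]
    exact ⟨hu₁, by nlinarith [hb 1]⟩
  | succ n hn ih =>
    have hB : 0 ≤ ∑ k ∈ Icc 1 n, b k := sum_nonneg fun k _ => hb k
    rw [sum_Icc_succ_top (by omega)]
    constructor
    · linarith [hu n hn, ih.1]
    · nlinarith [hv n hn, ih.2, hb (n + 1), mul_le_mul_of_nonneg_left ih.1 (hb (n + 1))]

noncomputable def erwWeight (p : ℝ) (n : ℕ) : ℝ :=
  Gamma n * Gamma (2 * p) / Gamma (n + 2 * p - 1)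

section erwWeight

variable {p : ℝ} {n : ℕ}

lemma erwWeight_one (hp : 0 < p) : erwWeight p 1 = 1 := by
  rw [erwWeight, Nat.cast_one, Gamma_one, one_mul, add_sub_cancel_left,
    div_self (Gamma_pos_of_pos (by linarith)).ne']

lemma erwWeight_pos (hp : 0 < p) (hn : 1 ≤ n) : 0 < erwWeight p n := by
  have : (1 : ℝ) ≤ n := by exact_mod_cast hn
  unfold erwWeight
  have := Gamma_pos_of_pos (show (0 : ℝ) < n by linarith)
  have := Gamma_pos_of_pos (show (0 : ℝ) < 2 * p by linarith)
  have := Gamma_pos_of_pos (show (0 : ℝ) < n + 2 * p - 1 by linarith)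
  positivity

lemma erwWeight_succ_mul (hp : 0 < p) (hn : 1 ≤ n) :
    erwWeight p (n + 1) * (1 + (2 * p - 1) / n) = erwWeight p n := by
  have h₁ : (1 : ℝ) ≤ n := by exact_mod_cast hn
  have h₂ : 0 < (n : ℝ) + 2 * p - 1 := by linarith
  unfold erwWeight
  rw [Nat.cast_succ, show (n : ℝ) + 1 + 2 * p - 1 = (n + 2 * p - 1) + 1 by ring,
    Gamma_add_one (by linarith), Gamma_add_one h₂.ne']
  have := (Gamma_pos_of_pos h₂).ne'
  field_simp
  ring

lemma sum_sq_erwWeight_le (hp : 3 / 4 < p) (n : ℕ) :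
    ∑ k ∈ Icc 1 n, erwWeight p k ^ 2 ≤ (4 * p - 2) / (4 * p - 3) := by
  have hc : 0 < 4 * p - 3 := by linarith
  convert sum_Icc_le_of_succ_mul_le hc (fun n => sq_nonneg (erwWeight p n)) (fun n hn => ?_) n
    using 1
  · rw [erwWeight_one (by linarith)]
    ring
  have hn' : (0 : ℝ) < n := by exact_mod_cast hn
  have := pow_mul_one_add_mul_le (erwWeight_pos (by linarith) hn).le
    (div_nonneg (by linarith) hn'.le) (erwWeight_succ_mul (by linarith) hn) 2
  calc erwWeight p (n + 1) ^ 2 * (n + 1 + (4 * p - 3))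
      = erwWeight p (n + 1) ^ 2 * (1 + (2 : ℕ) * ((2 * p - 1) / n)) * n := by
        field_simp
        ring
    _ ≤ erwWeight p n ^ 2 * n := by gcongr

end erwWeight

-- `m`, `s`, `x` and `c` stand for `ℱ n`, `S n`, `X (n + 1)` and `(2 * p - 1) / n`.
structure IsSignStepWithDrift {Ω : Type*} (m : MeasurableSpace Ω) [m0 : MeasurableSpace Ω]
    (μ : Measure Ω) (s x : Ω → ℝ) (c : ℝ) : Prop where
  le : m ≤ m0
  measurable : Measurable[m] s
  bounded : ∃ C, ∀ ω, |s ω| ≤ C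
  measurable_step : Measurable x
  step_eq_one_or_neg_one : ∀ ω, x ω = 1 ∨ x ω = -1
  condExp_step : μ[x | m] =ᵐ[μ] fun ω => c * s ω

namespace IsSignStepWithDrift

variable {Ω : Type*} {m m0 : MeasurableSpace Ω} {μ : Measure Ω} {s x : Ω → ℝ} {c : ℝ}

lemma norm_step_le (h : IsSignStepWithDrift m μ s x c) (ω : Ω) : ‖x ω‖ ≤ 1 := by
  rcases h.step_eq_one_or_neg_one ω with hx | hx <;> simp [hx]

lemma of_sum {ℱ : Filtration ℕ m0} {X : ℕ → Ω → ℝ} (hadp : ∀ i, Measurable[ℱ i] (X i))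
    (hpm : ∀ i ≥ 1, ∀ ω, X i ω = 1 ∨ X i ω = -1) {n : ℕ}
    (hCE : μ[X (n + 1) | ℱ n] =ᵐ[μ] fun ω => c * ∑ k ∈ Icc 1 n, X k ω) :
    IsSignStepWithDrift (ℱ n) μ (fun ω => ∑ k ∈ Icc 1 n, X k ω) (X (n + 1)) c where
  le := ℱ.le n
  measurable := measurable_sum _ fun k hk => (hadp k).mono (ℱ.mono (mem_Icc.mp hk).2) le_rfl
  bounded := ⟨n, fun ω => calc
    |∑ k ∈ Icc 1 n, X k ω| ≤ ∑ k ∈ Icc 1 n, |X k ω| := abs_sum_le_sum_abs _ _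
    _ ≤ ∑ k ∈ Icc 1 n, 1 := sum_le_sum fun k hk => by
      rcases hpm k (mem_Icc.mp hk).1 ω with h | h <;> simp [h]
    _ = n := by simp⟩
  measurable_step := (hadp _).mono (ℱ.le _) le_rfl
  step_eq_one_or_neg_one := hpm _ (Nat.le_add_left 1 n)
  condExp_step := hCE

section IsFiniteMeasure

variable [IsFiniteMeasure μ]

lemma integrable_pow (h : IsSignStepWithDrift m μ s x c) (k : ℕ) :
    Integrable (fun ω => s ω ^ k) μ := by
  obtain ⟨C, hC⟩ := h.bounded
  refine .of_bound ((h.measurable.mono h.le le_rfl).pow_const k).aestronglyMeasurable (C ^ k)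
    (ae_of_all _ fun ω => ?_)
  simpa [abs_pow] using pow_le_pow_left₀ (abs_nonneg _) (hC ω) k

lemma integrable_pow_mul (h : IsSignStepWithDrift m μ s x c) (k : ℕ) :
    Integrable (fun ω => s ω ^ k * x ω) μ :=
  (h.integrable_pow k).mul_bdd h.measurable_step.aestronglyMeasurable
    (ae_of_all _ h.norm_step_le)

lemma integral_pow_mul (h : IsSignStepWithDrift m μ s x c) (k : ℕ) :
    ∫ ω, s ω ^ k * x ω ∂μ = c * ∫ ω, s ω ^ (k + 1) ∂μ := by
  have hsk : StronglyMeasurable[m] fun ω => s ω ^ k :=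
    (h.measurable.pow_const k).stronglyMeasurable
  have hx : Integrable x μ :=
    .of_bound h.measurable_step.aestronglyMeasurable 1 (ae_of_all _ h.norm_step_le)
  calc ∫ ω, s ω ^ k * x ω ∂μ = ∫ ω, (μ[(fun ω => s ω ^ k) * x | m]) ω ∂μ :=
        (integral_condExp h.le).symm
    _ = ∫ ω, c * s ω ^ (k + 1) ∂μ := by
      refine integral_congr_ae ?_
      filter_upwards [condExp_mul_of_stronglyMeasurable_left hsk (h.integrable_pow_mul k) hx,
        h.condExp_step] with ω h₁ h₂
      rw [h₁, Pi.mul_apply, h₂, pow_succ]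
      ring
    _ = c * ∫ ω, s ω ^ (k + 1) ∂μ := integral_const_mul c _

end IsFiniteMeasure

variable [IsProbabilityMeasure μ]

lemma integral_sq_add (h : IsSignStepWithDrift m μ s x c) :
    ∫ ω, (s ω + x ω) ^ 2 ∂μ = (1 + 2 * c) * ∫ ω, s ω ^ 2 ∂μ + 1 := by
  have expand : ∀ ω, (s ω + x ω) ^ 2 = (s ω ^ 2 + 1) + 2 * (s ω ^ 1 * x ω) := fun ω => by
    rcases h.step_eq_one_or_neg_one ω with hx | hx <;> rw [hx] <;> ring
  have := h.integrable_pow 2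
  have := h.integrable_pow_mul 1
  simp_rw [expand]
  rw [integral_add (by fun_prop) (by fun_prop), integral_add (by fun_prop) (by fun_prop),
    integral_const_mul, h.integral_pow_mul 1]
  simp
  ring

lemma integral_pow_four_add (h : IsSignStepWithDrift m μ s x c) :
    ∫ ω, (s ω + x ω) ^ 4 ∂μ
      = (1 + 4 * c) * ∫ ω, s ω ^ 4 ∂μ + (6 + 4 * c) * ∫ ω, s ω ^ 2 ∂μ + 1 := by
  have expand : ∀ ω, (s ω + x ω) ^ 4
      = ((s ω ^ 4 + 6 * s ω ^ 2) + 1) + 4 * (s ω ^ 3 * x ω + s ω ^ 1 * x ω) := fun ω => by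
    rcases h.step_eq_one_or_neg_one ω with hx | hx <;> rw [hx] <;> ring
  have := h.integrable_pow 2
  have := h.integrable_pow 4
  have := h.integrable_pow_mul 1
  have := h.integrable_pow_mul 3
  simp_rw [expand]
  rw [integral_add (by fun_prop) (by fun_prop), integral_add (by fun_prop) (by fun_prop),
    integral_add (by fun_prop) (by fun_prop), integral_const_mul, integral_const_mul,
    integral_add (by fun_prop) (by fun_prop), h.integral_pow_mul 1, h.integral_pow_mul 3]
  simp
  ring

lemma integral_mul_add_sq_le (h : IsSignStepWithDrift m μ s x c) {a a' : ℝ} (ha : 0 ≤ a)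
    (hc : 0 ≤ c) (ha' : a' * (1 + c) = a) :
    ∫ ω, (a' * (s ω + x ω)) ^ 2 ∂μ ≤ ∫ ω, (a * s ω) ^ 2 ∂μ + a' ^ 2 := by
  have hI : 0 ≤ ∫ ω, s ω ^ 2 ∂μ := integral_nonneg fun ω => sq_nonneg _
  have hw := pow_mul_one_add_mul_le ha hc ha' 2
  push_cast at hw
  simp_rw [mul_pow, integral_const_mul, h.integral_sq_add]
  nlinarith [mul_le_mul_of_nonneg_right hw hI]

lemma integral_mul_add_pow_four_le (h : IsSignStepWithDrift m μ s x c) {a a' : ℝ} (ha : 0 ≤ a)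
    (hc : 0 ≤ c) (ha' : a' * (1 + c) = a) :
    ∫ ω, (a' * (s ω + x ω)) ^ 4 ∂μ
      ≤ ∫ ω, (a * s ω) ^ 4 ∂μ + 6 * a' ^ 2 * ∫ ω, (a * s ω) ^ 2 ∂μ + (a' ^ 2) ^ 2 := by
  have hI₂ : 0 ≤ ∫ ω, s ω ^ 2 ∂μ := integral_nonneg fun ω => sq_nonneg _
  have hI₄ : 0 ≤ ∫ ω, s ω ^ 4 ∂μ := integral_nonneg fun ω => by positivity
  have hw₂ := pow_mul_one_add_mul_le ha hc ha' 2
  have hw₄ := pow_mul_one_add_mul_le ha hc ha' 4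
  push_cast at hw₂ hw₄
  have hw₂' : a' ^ 2 * (6 + 4 * c) ≤ 6 * a ^ 2 := by nlinarith [sq_nonneg a', hc]
  simp_rw [mul_pow, integral_const_mul, h.integral_pow_four_add]
  nlinarith [mul_le_mul_of_nonneg_right hw₄ hI₄,
    mul_le_mul_of_nonneg_right (mul_le_mul_of_nonneg_left hw₂' (sq_nonneg a')) hI₂]

end IsSignStepWithDrift

/-- Superdiffusive regime `3/4 < p ≤ 1`: the martingale `M_n = a_n S_n` is bounded in `L⁴`:
`E[M_n⁴] ≤ 6(1 + Σ_{k=1}^n a_k²) Σ_{k=1}^n a_k²` for all `n ≥ 1`, and hence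
`sup_{n≥1} E[M_n⁴] < ∞`. -/
theorem erw_L4_bounded
    {Ω : Type*} [m0 : MeasurableSpace Ω] (μ : Measure Ω) [IsProbabilityMeasure μ]
    (p : ℝ) (hp : p ∈ Set.Ioc (3 / 4 : ℝ) 1)
    (ℱ : ℕ → MeasurableSpace Ω) (hℱ : ∀ n, ℱ n ≤ m0) (hmono : Monotone ℱ)
    (X : ℕ → Ω → ℝ)
    (hadp : ∀ i, Measurable[ℱ i] (X i))
    (hpm : ∀ i ≥ 1, ∀ ω, X i ω = 1 ∨ X i ω = -1)
    (S : ℕ → Ω → ℝ) (hS : ∀ n ω, S n ω = ∑ k ∈ Finset.Icc 1 n, X k ω)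
    (hCE : ∀ n ≥ 1, μ[X (n + 1) | ℱ n] =ᵐ[μ] fun ω => (2 * p - 1) * S n ω / n)
    (a : ℕ → ℝ)
    (ha : ∀ n ≥ 1, a n = Real.Gamma n * Real.Gamma (2 * p) / Real.Gamma (n + 2 * p - 1))
    (M : ℕ → Ω → ℝ) (hM : ∀ n ω, M n ω = a n * S n ω) :
    (∀ n ≥ 1, ∫ ω, (M n ω) ^ 4 ∂μ
        ≤ 6 * (1 + ∑ k ∈ Finset.Icc 1 n, (a k) ^ 2) * ∑ k ∈ Finset.Icc 1 n, (a k) ^ 2)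
    ∧ ∃ C : ℝ, ∀ n ≥ 1, ∫ ω, (M n ω) ^ 4 ∂μ ≤ C := by
  have hp₀ : 0 < p := by linarith [hp.1]
  have ha_eq : ∀ n ≥ 1, a n = erwWeight p n := ha
  have hweight : ∀ n ≥ 1, 0 ≤ a n ∧ a (n + 1) * (1 + (2 * p - 1) / n) = a n := fun n hn => by
    rw [ha_eq n hn, ha_eq (n + 1) (by omega)]
    exact ⟨(erwWeight_pos hp₀ hn).le, erwWeight_succ_mul hp₀ hn⟩
  have hdrift : ∀ n : ℕ, 0 ≤ (2 * p - 1) / n := fun n =>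
    div_nonneg (by linarith [hp.1]) n.cast_nonneg
  have hstep : ∀ n ≥ 1, IsSignStepWithDrift (ℱ n) μ (S n) (X (n + 1)) ((2 * p - 1) / n) :=
    fun n hn => funext (hS n) ▸ .of_sum (ℱ := ⟨ℱ, hmono, hℱ⟩) hadp hpm
      ((hCE n hn).trans (.of_forall fun ω => by simp only [hS]; ring))
  have hM_succ : ∀ n ω, M (n + 1) ω = a (n + 1) * (S n ω + X (n + 1) ω) := fun n ω => by
    rw [hM, hS, hS, sum_Icc_succ_top (by omega)]
  have hM₁ : ∀ ω, M 1 ω ^ 2 = 1 ∧ M 1 ω ^ 4 = 1 := fun ω => by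
    rcases hpm 1 le_rfl ω with h | h <;> norm_num [hM, hS, ha_eq 1 le_rfl, erwWeight_one hp₀, h]
  have hmom := moments_le_of_recursion (u := fun n => ∫ ω, M n ω ^ 2 ∂μ)
    (v := fun n => ∫ ω, M n ω ^ 4 ∂μ) (fun n => sq_nonneg (a n))
    (by simp [hM₁, ha_eq 1 le_rfl, erwWeight_one hp₀])
    (by simp [hM₁, ha_eq 1 le_rfl, erwWeight_one hp₀])
    (fun n hn => by
      simpa only [hM_succ, hM] using
        (hstep n hn).integral_mul_add_sq_le (hweight n hn).1 (hdrift n) (hweight n hn).2)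
    (fun n hn => by
      simpa only [hM_succ, hM] using
        (hstep n hn).integral_mul_add_pow_four_le (hweight n hn).1 (hdrift n) (hweight n hn).2)
  have hsum : ∀ n, ∑ k ∈ Icc 1 n, a k ^ 2 ≤ (4 * p - 2) / (4 * p - 3) := fun n => by
    rw [sum_congr rfl fun k hk => by rw [ha_eq k (mem_Icc.mp hk).1]]
    exact sum_sq_erwWeight_le hp.1 n
  refine ⟨fun n hn => (hmom n hn).2,
    6 * (1 + (4 * p - 2) / (4 * p - 3)) * ((4 * p - 2) / (4 * p - 3)),
    fun n hn => (hmom n hn).2.trans ?_⟩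
  have hB := sum_nonneg fun k (_ : k ∈ Icc 1 n) => sq_nonneg (a k)
  nlinarith [hsum n]
end

section
/- Let L be the limit of S_n/n^{2p-1} in the superdiffusive regime 3/4 < p < 1 with q = 1/2. Then L has mean 0, skewness 0, and kurtosis κ(p) = 6(8p^2-4p-1)(Γ(2(2p-1)))^2 / ((8p-5) Γ(4(2p-1))). Moreover κ(p) < 3 for all p ∈ (3/4, 1], so L is not Gaussian. -/
open MeasureTheory ProbabilityTheory Real
open scoped NNReal

/-! If `L` were Gaussian, `E L = 0` would make it centred, and a centred Gaussian has
`E L⁴ = 3 (E L²)²`, i.e. kurtosis `3`. But with `s = 4p - 3`,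
`κ(p) = 6 (8p² - 4p - 1) / (8p - 5)² · Γ(1 + s)² / Γ(1 + 2s)`: the Gamma ratio is at most `1`
by log-convexity of `Γ` (`1 + s` is the midpoint of `1` and `1 + 2s`), and the rational factor
is below `3` since `3 (8p - 5)² - 6 (8p² - 4p - 1) = 9 (4p - 3)²`. -/

lemma integral_pow_two_mul_mul_exp_neg_mul_sq {b : ℝ} (hb : 0 < b) (n : ℕ) :
    ∫ x : ℝ, x ^ (2 * n) * rexp (-b * x ^ 2) = b ^ (-(n + 1 / 2 : ℝ)) * Gamma (n + 1 / 2) := by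
  have hq : (-1 : ℝ) < (2 * n : ℕ) := neg_one_lt_zero.trans_le (Nat.cast_nonneg _)
  have h := integral_rpow_mul_exp_neg_mul_rpow two_pos hq hb
  have heven : ∀ x : ℝ, x ^ (2 * n) * rexp (-b * x ^ 2)
      = |x| ^ ((2 * n : ℕ) : ℝ) * rexp (-b * |x| ^ (2 : ℝ)) := by
    intro x
    rw [rpow_natCast, rpow_two, pow_mul, pow_mul, sq_abs]
  simp_rw [heven]
  rw [integral_comp_abs (f := fun x ↦ x ^ ((2 * n : ℕ) : ℝ) * rexp (-b * x ^ (2 : ℝ))), h]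
  push_cast
  rw [show (2 * n + 1 : ℝ) / 2 = n + 1 / 2 by ring, show -(2 * n + 1 : ℝ) / 2 = -(n + 1 / 2) by ring]
  ring

open scoped Nat in
lemma integral_pow_two_mul_gaussianReal_zero (v : ℝ≥0) (n : ℕ) :
    ∫ x, x ^ (2 * n) ∂gaussianReal 0 v = (v : ℝ) ^ n * (2 * n - 1 : ℕ)‼ := by
  rcases eq_or_ne v 0 with rfl | hv
  · cases n <;> simp [gaussianReal_zero_var]
  have h2v : 0 < 2 * (v : ℝ) := by positivity
  have hpdf : ∀ x, gaussianPDFReal 0 v x • x ^ (2 * n)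
      = (√π * √(2 * v))⁻¹ * (x ^ (2 * n) * rexp (-(2 * (v : ℝ))⁻¹ * x ^ 2)) := by
    intro x
    rw [gaussianPDFReal, smul_eq_mul, show 2 * π * v = π * (2 * v) by ring, sqrt_mul pi_pos.le,
      sub_zero, neg_div, div_eq_inv_mul, neg_mul]
    ring
  simp_rw [integral_gaussianReal_eq_integral_smul hv, hpdf]
  rw [integral_const_mul, integral_pow_two_mul_mul_exp_neg_mul_sq (inv_pos.2 h2v),
    Gamma_nat_add_half, inv_rpow h2v.le, ← rpow_neg h2v.le, neg_neg, rpow_add h2v, rpow_natCast,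
    ← sqrt_eq_rpow]
  have : (0 : ℝ) < √π := sqrt_pos.2 pi_pos
  have : (0 : ℝ) < √(2 * v) := sqrt_pos.2 h2v
  field_simp
  ring

lemma Real.Gamma_midpoint_sq_le {x y : ℝ} (hx : 0 < x) (hy : 0 < y) :
    Gamma ((x + y) / 2) ^ 2 ≤ Gamma x * Gamma y := by
  have hconv := convexOn_log_Gamma.2 hx hy (by norm_num : (0 : ℝ) ≤ 1 / 2)
    (by norm_num : (0 : ℝ) ≤ 1 / 2) (by norm_num)
  simp only [Function.comp, smul_eq_mul] at hconv
  rw [show 1 / 2 * x + 1 / 2 * y = (x + y) / 2 by ring] at hconv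
  have hmid : 0 < Gamma ((x + y) / 2) := Gamma_pos_of_pos (by positivity)
  rw [← log_le_log_iff (by positivity) (mul_pos (Gamma_pos_of_pos hx) (Gamma_pos_of_pos hy)),
    log_pow, log_mul (Gamma_pos_of_pos hx).ne' (Gamma_pos_of_pos hy).ne']
  push_cast
  linarith

noncomputable def erwKurtosis (p : ℝ) : ℝ :=
  6 * (8 * p ^ 2 - 4 * p - 1) * Gamma (2 * (2 * p - 1)) ^ 2
    / ((8 * p - 5) * Gamma (4 * (2 * p - 1)))

lemma erwKurtosis_lt_three {p : ℝ} (hp : 3 / 4 < p) : erwKurtosis p < 3 := by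
  have h85 : 0 < 8 * p - 5 := by linarith
  have hsq : Gamma (2 * (2 * p - 1)) ^ 2 ≤ Gamma (8 * p - 5) := by
    have := Gamma_midpoint_sq_le one_pos h85
    rwa [show (1 + (8 * p - 5)) / 2 = 2 * (2 * p - 1) by ring, Gamma_one, one_mul] at this
  have hG4 : Gamma (4 * (2 * p - 1)) = (8 * p - 5) * Gamma (8 * p - 5) := by
    rw [show 4 * (2 * p - 1) = (8 * p - 5) + 1 by ring, Gamma_add_one h85.ne']
  have hA : 0 < 8 * p ^ 2 - 4 * p - 1 := by nlinarith
  have hrat : 6 * (8 * p ^ 2 - 4 * p - 1) < 3 * (8 * p - 5) ^ 2 := by nlinarith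
  rw [erwKurtosis, hG4, div_lt_iff₀ (by positivity)]
  calc 6 * (8 * p ^ 2 - 4 * p - 1) * Gamma (2 * (2 * p - 1)) ^ 2
      ≤ 6 * (8 * p ^ 2 - 4 * p - 1) * Gamma (8 * p - 5) := by gcongr
    _ < 3 * (8 * p - 5) ^ 2 * Gamma (8 * p - 5) := by gcongr
    _ = 3 * ((8 * p - 5) * ((8 * p - 5) * Gamma (8 * p - 5))) := by ring

lemma erwKurtosis_eq_div_sq {p : ℝ} (hp : 3 / 4 < p) :
    6 * (8 * p ^ 2 - 4 * p - 1) / ((8 * p - 5) * (4 * p - 3) ^ 2 * Gamma (4 * (2 * p - 1)))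
      / (1 / ((4 * p - 3) * Gamma (2 * (2 * p - 1)))) ^ 2 = erwKurtosis p := by
  have h43 : 4 * p - 3 ≠ 0 := by linarith
  have h85 : 8 * p - 5 ≠ 0 := by linarith
  have hG2 : Gamma (2 * (2 * p - 1)) ≠ 0 := (Gamma_pos_of_pos (by linarith)).ne'
  have hG4 : Gamma (4 * (2 * p - 1)) ≠ 0 := (Gamma_pos_of_pos (by linarith)).ne'
  rw [erwKurtosis]
  generalize Gamma (2 * (2 * p - 1)) = a at hG2 ⊢
  generalize Gamma (4 * (2 * p - 1)) = b at hG4 ⊢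
  generalize 4 * p - 3 = q at h43 ⊢
  field_simp

lemma integral_pow_four_eq_three_mul_sq_of_map_eq_gaussianReal {Ω : Type*} [MeasurableSpace Ω]
    {μ : Measure Ω} {X : Ω → ℝ} {m : ℝ} {v : ℝ≥0} (hX : μ.map X = gaussianReal m v)
    (hmean : ∫ ω, X ω ∂μ = 0) :
    ∫ ω, X ω ^ 4 ∂μ = 3 * (∫ ω, X ω ^ 2 ∂μ) ^ 2 := by
  have hXm : AEMeasurable X μ := .of_map_ne_zero (hX ▸ IsProbabilityMeasure.ne_zero _)
  have hlaw (f : ℝ → ℝ) (hf : Measurable f) : ∫ ω, f (X ω) ∂μ = ∫ x, f x ∂gaussianReal m v := by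
    rw [← hX, integral_map hXm hf.aestronglyMeasurable]
  have hm : m = 0 := by
    rw [← integral_id_gaussianReal (μ := m) (v := v), ← hmean]
    exact (hlaw id measurable_id).symm
  subst hm
  have h2 : ∫ x, x ^ 2 ∂gaussianReal 0 v = v := by
    simpa using integral_pow_two_mul_gaussianReal_zero v 1
  have h4 : ∫ x, x ^ 4 ∂gaussianReal 0 v = 3 * (v : ℝ) ^ 2 := by
    simpa [Nat.doubleFactorial, mul_comm] using integral_pow_two_mul_gaussianReal_zero v 2
  rw [hlaw (· ^ 4) (by fun_prop), hlaw (· ^ 2) (by fun_prop), h4, h2]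

theorem erw_limit_not_gaussian_general
    {Ω : Type*} [m0 : MeasurableSpace Ω] (μ : Measure Ω)
    (p : ℝ) (hp : 3 / 4 < p)
    (L : Ω → ℝ)
    (hm1 : ∫ ω, L ω ∂μ = 0)
    (hm2 : ∫ ω, (L ω) ^ 2 ∂μ = 1 / ((4 * p - 3) * Real.Gamma (2 * (2 * p - 1))))
    (hm3 : ∫ ω, (L ω) ^ 3 ∂μ = 0)
    (hm4 : ∫ ω, (L ω) ^ 4 ∂μ
      = 6 * (8 * p ^ 2 - 4 * p - 1)
          / ((8 * p - 5) * (4 * p - 3) ^ 2 * Real.Gamma (4 * (2 * p - 1)))) :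
    (∫ ω, L ω ∂μ = 0)
    ∧ (∫ ω, (L ω) ^ 3 ∂μ) / (Real.sqrt (∫ ω, (L ω) ^ 2 ∂μ)) ^ 3 = 0
    ∧ (∫ ω, (L ω) ^ 4 ∂μ) / (∫ ω, (L ω) ^ 2 ∂μ) ^ 2
        = 6 * (8 * p ^ 2 - 4 * p - 1) * (Real.Gamma (2 * (2 * p - 1))) ^ 2
            / ((8 * p - 5) * Real.Gamma (4 * (2 * p - 1)))
    ∧ (∀ r : ℝ, 3 / 4 < r → r ≤ 1 →
        6 * (8 * r ^ 2 - 4 * r - 1) * (Real.Gamma (2 * (2 * r - 1))) ^ 2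
            / ((8 * r - 5) * Real.Gamma (4 * (2 * r - 1))) < 3)
    ∧ ¬ ∃ (m : ℝ) (v : ℝ≥0), Measure.map L μ = gaussianReal m v := by
  have hkurt : (∫ ω, L ω ^ 4 ∂μ) / (∫ ω, L ω ^ 2 ∂μ) ^ 2 = erwKurtosis p := by
    rw [hm4, hm2, erwKurtosis_eq_div_sq hp]
  refine ⟨hm1, by rw [hm3, zero_div], hkurt, fun r hr _ ↦ erwKurtosis_lt_three hr, ?_⟩
  rintro ⟨m, v, hgauss⟩
  have hvar : ∫ ω, L ω ^ 2 ∂μ ≠ 0 := by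
    rw [hm2]
    have := Gamma_pos_of_pos (show 0 < 2 * (2 * p - 1) by linarith)
    exact (div_pos one_pos (mul_pos (by linarith) this)).ne'
  have hthree : erwKurtosis p = 3 := by
    rw [← hkurt, integral_pow_four_eq_three_mul_sq_of_map_eq_gaussianReal hgauss hm1]
    field_simp
  exact (erwKurtosis_lt_three hp).ne hthree

/-- Superdiffusive regime with `q = 1/2`: the limit `L` of `S_n/n^{2p-1}` has mean `0`,
skewness `0`, and kurtosis `κ(p) = 6(8p²-4p-1)Γ(2(2p-1))²/((8p-5)Γ(4(2p-1)))`;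
moreover `κ(p) < 3` for all `p ∈ (3/4, 1]`, so `L` is not Gaussian. -/
theorem erw_limit_not_gaussian
    {Ω : Type*} [m0 : MeasurableSpace Ω] (μ : Measure Ω) [IsProbabilityMeasure μ]
    (p : ℝ) (hp : 3 / 4 < p) (hp1 : p < 1)
    (L : Ω → ℝ) (hL : Measurable L)
    (hint : ∀ i ≤ 4, Integrable (fun ω => (L ω) ^ i) μ)
    (hm1 : ∫ ω, L ω ∂μ = 0)
    (hm2 : ∫ ω, (L ω) ^ 2 ∂μ = 1 / ((4 * p - 3) * Real.Gamma (2 * (2 * p - 1))))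
    (hm3 : ∫ ω, (L ω) ^ 3 ∂μ = 0)
    (hm4 : ∫ ω, (L ω) ^ 4 ∂μ
      = 6 * (8 * p ^ 2 - 4 * p - 1)
          / ((8 * p - 5) * (4 * p - 3) ^ 2 * Real.Gamma (4 * (2 * p - 1)))) :
    (∫ ω, L ω ∂μ = 0)
    ∧ (∫ ω, (L ω) ^ 3 ∂μ) / (Real.sqrt (∫ ω, (L ω) ^ 2 ∂μ)) ^ 3 = 0
    ∧ (∫ ω, (L ω) ^ 4 ∂μ) / (∫ ω, (L ω) ^ 2 ∂μ) ^ 2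
        = 6 * (8 * p ^ 2 - 4 * p - 1) * (Real.Gamma (2 * (2 * p - 1))) ^ 2
            / ((8 * p - 5) * Real.Gamma (4 * (2 * p - 1)))
    ∧ (∀ r : ℝ, 3 / 4 < r → r ≤ 1 →
        6 * (8 * r ^ 2 - 4 * r - 1) * (Real.Gamma (2 * (2 * r - 1))) ^ 2
            / ((8 * r - 5) * Real.Gamma (4 * (2 * r - 1))) < 3)
    ∧ ¬ ∃ (m : ℝ) (v : ℝ≥0), Measure.map L μ = gaussianReal m v :=
  erw_limit_not_gaussian_general (m0 := m0) μ p hp L hm1 hm2 hm3 hm4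
end
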